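/- arXiv:math/0609412 — 8 statements merged into one kernel-verified Lean document; each statement's English description precedes it below -/
import Mathlib

section
/- If q ∈ ℤ[x] is monic of degree g ≥ 1, then sym(q) is symplectically irreducible if and only if q is irreducible in ℤ[x]. -/
/-!
`sym(q)` is the homogenization `Σ aᵢ Yⁱ Z^(g-i)` of `q` evaluated at `Y = X² + 1`, `Z = X`, so
it is multiplicative on monic polynomials. It is a bijection from monic polynomials of degree `n`
onto symplectic polynomials of degree `2n`: the constant coefficient of `sym(q)` is the leading
coefficient of `q`, and subtracting `c (X² + 1)ⁿ` from a palindromic polynomial of degree `2n`,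
with `c` its constant coefficient, leaves `X` times a palindromic polynomial of degree `2n - 2`,
so `q` can be recovered (and constructed) one coefficient at a time. Hence factorizations of `q`
into monic factors of positive degree correspond exactly to factorizations of `sym(q)` into
symplectic polynomials.
-/

open Polynomial

/-- For a polynomial `q = a_g x^g + … + a_0` of degree `g`,
`sym(q) = ∑ a_i x^{g-i} (x²+1)^i`, i.e. `sym(q)(x) = x^g · q(x + 1/x)`. -/
noncomputable def symPoly (q : Polynomial ℤ) : Polynomial ℤ :=
  ∑ i ∈ Finset.range (q.natDegree + 1),
    Polynomial.C (q.coeff i) * Polynomial.X ^ (q.natDegree - i) * (Polynomial.X ^ 2 + 1) ^ i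

/-- A polynomial is symplectic if it is monic of even degree `2n` (`n ≥ 1`) and palindromic. -/
def IsSymplecticPoly (p : Polynomial ℤ) : Prop :=
  p.Monic ∧ (∃ n : ℕ, 1 ≤ n ∧ p.natDegree = 2 * n) ∧
    ∀ i ≤ p.natDegree, p.coeff i = p.coeff (p.natDegree - i)

/-- A symplectic polynomial is symplectically irreducible if it is not the
product of two symplectic polynomials. -/
def SymplecticallyIrreducible (p : Polynomial ℤ) : Prop :=
  IsSymplecticPoly p ∧
    ¬ ∃ p₁ p₂ : Polynomial ℤ, IsSymplecticPoly p₁ ∧ IsSymplecticPoly p₂ ∧ p = p₁ * p₂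

namespace Polynomial
variable {R : Type*} [CommRing R]

variable (R) in
def palindromic (N : ℕ) : Submodule R R[X] where
  carrier := {f | f.natDegree ≤ N ∧ f.reflect N = f}
  add_mem' := fun ⟨hf, hf'⟩ ⟨hg, hg'⟩ =>
    ⟨natDegree_add_le_of_degree_le hf hg, by rw [reflect_add, hf', hg']⟩
  zero_mem' := ⟨by simp, reflect_zero⟩
  smul_mem' c f := fun ⟨hf, hf'⟩ => by
    refine ⟨(natDegree_smul_le c f).trans hf, ?_⟩
    rw [smul_eq_C_mul, reflect_C_mul, hf']

theorem mem_palindromic {N : ℕ} {f : R[X]} :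
    f ∈ palindromic R N ↔ f.natDegree ≤ N ∧ f.reflect N = f := Iff.rfl

theorem mul_mem_palindromic {M N : ℕ} {f g : R[X]} (hf : f ∈ palindromic R M)
    (hg : g ∈ palindromic R N) : f * g ∈ palindromic R (M + N) :=
  ⟨natDegree_mul_le_of_le hf.1 hg.1, by rw [reflect_mul f g hf.1 hg.1, hf.2, hg.2]⟩

theorem pow_mem_palindromic {N : ℕ} {f : R[X]} (hf : f ∈ palindromic R N) (k : ℕ) :
    f ^ k ∈ palindromic R (N * k) := by
  induction k with
  | zero => simpa using ⟨natDegree_one.le, reflect_one 0⟩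
  | succ k ih => simpa [pow_succ, mul_add] using mul_mem_palindromic ih hf

theorem X_mem_palindromic : (X : R[X]) ∈ palindromic R 2 :=
  ⟨natDegree_X_le.trans one_le_two, by simpa using reflect_monomial (R := R) 2 1⟩

theorem X_sq_add_one_mem_palindromic : (X ^ 2 + 1 : R[X]) ∈ palindromic R 2 := by
  refine ⟨(natDegree_add_le _ _).trans (by simp [natDegree_X_pow_le]), ?_⟩
  rw [reflect_add, reflect_monomial, reflect_one]
  simp [add_comm]

theorem coeff_eq_of_mem_palindromic {N : ℕ} {f : R[X]} (hf : f ∈ palindromic R N) {i : ℕ}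
    (hi : i ≤ N) : f.coeff i = f.coeff (N - i) := by
  rw [← revAt_le hi, ← coeff_reflect, hf.2]

theorem reflect_eq_self_iff {N : ℕ} {f : R[X]} (hf : f.natDegree ≤ N) :
    f.reflect N = f ↔ ∀ i ≤ N, f.coeff i = f.coeff (N - i) := by
  refine ⟨fun h i hi => coeff_eq_of_mem_palindromic ⟨hf, h⟩ hi, fun h => ?_⟩
  ext i
  rw [coeff_reflect]
  rcases le_or_gt i N with hi | hi
  · rw [revAt_le hi, h i hi]
  · rw [revAt_eq_self_of_lt hi]

theorem mem_palindromic_of_X_mul_mem {N : ℕ} {f : R[X]} (hf : X * f ∈ palindromic R (N + 2)) :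
    f ∈ palindromic R N := by
  have hdeg : f.natDegree ≤ N := by
    rw [natDegree_le_iff_coeff_eq_zero]
    intro i hi
    rcases (Nat.succ_le_of_lt hi).eq_or_lt with rfl | hi
    · rw [← coeff_X_mul, coeff_eq_of_mem_palindromic hf le_rfl]
      simp
    · rw [← coeff_X_mul]
      exact coeff_eq_zero_of_natDegree_lt (hf.1.trans_lt (by omega))
  refine ⟨hdeg, isRegular_X.left ?_⟩
  have h := hf.2
  rwa [add_comm, reflect_mul _ _ X_mem_palindromic.1 hdeg, X_mem_palindromic.2] at h

/-- `sym(q)` computed as if `q` had degree `n`; for `q.natDegree ≤ n` it is `Xⁿ q(X + X⁻¹)`. -/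
noncomputable def symLift (q : R[X]) (n : ℕ) : R[X] :=
  ∑ i ∈ Finset.range (n + 1), C (q.coeff i) * X ^ (n - i) * (X ^ 2 + 1) ^ i

theorem symLift_zero (q : R[X]) : symLift q 0 = C (q.coeff 0) := by
  simp [symLift]

theorem symLift_succ (q : R[X]) (n : ℕ) :
    symLift q (n + 1) = X * symLift q n + C (q.coeff (n + 1)) * (X ^ 2 + 1) ^ (n + 1) := by
  rw [symLift, Finset.sum_range_succ, Nat.sub_self, pow_zero, mul_one, symLift, Finset.mul_sum]
  congr 1
  refine Finset.sum_congr rfl fun i hi => ?_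
  rw [Nat.sub_add_comm (Finset.mem_range_succ_iff.mp hi), pow_succ]
  ring

theorem symLift_congr {p q : R[X]} {n : ℕ} (h : ∀ i ≤ n, p.coeff i = q.coeff i) :
    symLift p n = symLift q n :=
  Finset.sum_congr rfl fun i hi => by rw [h i (Finset.mem_range_succ_iff.mp hi)]

theorem symLift_sub (p q : R[X]) (n : ℕ) : symLift (p - q) n = symLift p n - symLift q n := by
  simp only [symLift, coeff_sub, C_sub, sub_mul, Finset.sum_sub_distrib]

theorem coeff_zero_symLift (q : R[X]) (n : ℕ) : (symLift q n).coeff 0 = q.coeff n := by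
  cases n with
  | zero => simp [symLift_zero]
  | succ n => simp [symLift_succ, coeff_zero_eq_eval_zero]

theorem symLift_mem_palindromic (q : R[X]) (n : ℕ) : symLift q n ∈ palindromic R (2 * n) := by
  induction n with
  | zero => simp [symLift_zero, mem_palindromic, reflect_C]
  | succ n ih =>
    have hX := mul_mem_palindromic X_mem_palindromic ih
    rw [show 2 + 2 * n = 2 * (n + 1) by ring] at hX
    rw [symLift_succ, C_mul']
    exact add_mem hX (Submodule.smul_mem _ _ (pow_mem_palindromic X_sq_add_one_mem_palindromic _))

theorem symLift_eq_aeval_homogenize (q : R[X]) (n : ℕ) :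
    symLift q n = MvPolynomial.aeval ![X ^ 2 + 1, X] (q.homogenize n) := by
  simp only [symLift, homogenize, Finset.Nat.sum_antidiagonal_eq_sum_range_succ_mk, map_sum,
    MvPolynomial.aeval_monomial, algebraMap_eq, Finsupp.prod_pow, Finsupp.coe_update,
    Fin.prod_univ_two, Matrix.cons_val_zero, ne_eq, zero_ne_one, not_false_eq_true,
    Function.update_of_ne, Finsupp.single_eq_same, Matrix.cons_val_one, Matrix.cons_val_fin_one,
    Function.update_self]
  exact Finset.sum_congr rfl fun i _ => by ring

theorem symLift_mul {p q : R[X]} {m n : ℕ} (hp : p.natDegree ≤ m) (hq : q.natDegree ≤ n) :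
    symLift (p * q) (m + n) = symLift p m * symLift q n := by
  simp only [symLift_eq_aeval_homogenize, homogenize_mul p q hp hq, map_mul]

theorem eq_zero_of_symLift_eq_zero {q : R[X]} {n : ℕ} (hq : q.natDegree ≤ n)
    (h : symLift q n = 0) : q = 0 := by
  induction n with
  | zero => rw [eq_C_of_natDegree_le_zero hq, ← symLift_zero, h]
  | succ n ih =>
    have htop : q.coeff (n + 1) = 0 := by rw [← coeff_zero_symLift, h, coeff_zero]
    rw [symLift_succ, htop, C_0, zero_mul, add_zero, ← mul_zero X] at h
    exact ih (natDegree_le_pred hq htop) (isRegular_X.left h)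

theorem symLift_inj {p q : R[X]} {n : ℕ} (hp : p.natDegree ≤ n) (hq : q.natDegree ≤ n) :
    symLift p n = symLift q n ↔ p = q := by
  refine ⟨fun h => sub_eq_zero.mp (eq_zero_of_symLift_eq_zero (n := n) ?_ ?_), fun h => h ▸ rfl⟩
  · exact (natDegree_sub_le p q).trans (max_le hp hq)
  · rw [symLift_sub, h, sub_self]

theorem exists_symLift_eq {n : ℕ} {r : R[X]} (hr : r ∈ palindromic R (2 * n)) :
    ∃ q : R[X], q.natDegree ≤ n ∧ symLift q n = r := by
  induction n generalizing r with
  | zero => exact ⟨r, hr.1, by rw [symLift_zero, ← eq_C_of_natDegree_le_zero hr.1]⟩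
  | succ n ih =>
    -- the constant coefficient of `symLift q (n + 1)` is `q.coeff (n + 1)`
    set c := r.coeff 0
    have hs : r - C c * (X ^ 2 + 1) ^ (n + 1) ∈ palindromic R (2 * n + 2) := by
      rw [C_mul']
      exact sub_mem hr (Submodule.smul_mem _ _ (pow_mem_palindromic X_sq_add_one_mem_palindromic _))
    obtain ⟨t, ht⟩ : X ∣ r - C c * (X ^ 2 + 1) ^ (n + 1) := by
      simp [X_dvd_iff, c, coeff_zero_eq_eval_zero]
    obtain ⟨q, hq, rfl⟩ := ih (mem_palindromic_of_X_mul_mem (ht ▸ hs))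
    refine ⟨q + C c * X ^ (n + 1), ?_, ?_⟩
    · exact natDegree_add_le_of_degree_le (hq.trans n.le_succ) (natDegree_C_mul_X_pow_le _ _)
    · have hlow : symLift (q + C c * X ^ (n + 1)) n = symLift q n :=
        symLift_congr fun i hi => by simp [coeff_X_pow, show i ≠ n + 1 by omega]
      have htop : (q + C c * X ^ (n + 1)).coeff (n + 1) = c := by
        simp [coeff_eq_zero_of_natDegree_lt (hq.trans_lt n.lt_succ_self)]
      rw [symLift_succ, hlow, htop, ← ht, sub_add_cancel]

theorem coeff_two_mul_symLift (q : R[X]) (n : ℕ) : (symLift q n).coeff (2 * n) = q.coeff n := by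
  rw [← Nat.sub_zero (2 * n),
    ← coeff_eq_of_mem_palindromic (symLift_mem_palindromic q n) (Nat.zero_le _), coeff_zero_symLift]

theorem isMonicOfDegree_symLift_iff [Nontrivial R] {q : R[X]} {n : ℕ} (hq : q.natDegree ≤ n) :
    IsMonicOfDegree (symLift q n) (2 * n) ↔ IsMonicOfDegree q n := by
  rw [isMonicOfDegree_iff, isMonicOfDegree_iff, coeff_two_mul_symLift,
    and_iff_right (symLift_mem_palindromic q n).1, and_iff_right hq]

end Polynomial

theorem symPoly_eq_symLift (q : ℤ[X]) : symPoly q = q.symLift q.natDegree := rfl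

theorem symPoly_mul {p q : ℤ[X]} (hp : p.Monic) (hq : q.Monic) :
    symPoly (p * q) = symPoly p * symPoly q := by
  rw [symPoly_eq_symLift, hp.natDegree_mul hq]
  exact symLift_mul le_rfl le_rfl

theorem isMonicOfDegree_symPoly {q : ℤ[X]} (hq : q.Monic) :
    IsMonicOfDegree (symPoly q) (2 * q.natDegree) :=
  (isMonicOfDegree_symLift_iff le_rfl).mpr ⟨rfl, hq⟩

theorem symPoly_inj {p q : ℤ[X]} (hp : p.Monic) (hq : q.Monic) :
    symPoly p = symPoly q ↔ p = q := by
  refine ⟨fun h => ?_, congrArg symPoly⟩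
  have hdeg : p.natDegree = q.natDegree := by
    have := (isMonicOfDegree_symPoly hp).natDegree_eq
    rw [h, (isMonicOfDegree_symPoly hq).natDegree_eq] at this
    omega
  rwa [symPoly_eq_symLift, symPoly_eq_symLift, hdeg, symLift_inj hdeg.le le_rfl] at h

theorem isSymplecticPoly_iff {p : ℤ[X]} :
    IsSymplecticPoly p ↔ ∃ n ≠ 0, IsMonicOfDegree p (2 * n) ∧ p ∈ palindromic ℤ (2 * n) := by
  constructor
  · rintro ⟨hp, ⟨n, hn, hdeg⟩, hpal⟩
    refine ⟨n, by omega, ⟨hdeg, hp⟩, hdeg.le, ?_⟩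
    rw [← hdeg]
    exact (reflect_eq_self_iff le_rfl).mpr hpal
  · rintro ⟨n, hn, ⟨hdeg, hp⟩, -, hpal⟩
    refine ⟨hp, ⟨n, by omega, hdeg⟩, ?_⟩
    rw [hdeg]
    exact (reflect_eq_self_iff hdeg.le).mp hpal

theorem isSymplecticPoly_iff_exists_symPoly {p : ℤ[X]} :
    IsSymplecticPoly p ↔ ∃ q : ℤ[X], q.Monic ∧ q.natDegree ≠ 0 ∧ symPoly q = p := by
  rw [isSymplecticPoly_iff]
  constructor
  · rintro ⟨n, hn, hmon, hpal⟩
    obtain ⟨q, hq, rfl⟩ := exists_symLift_eq hpal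
    obtain ⟨hdeg, hq⟩ := (isMonicOfDegree_symLift_iff hq).mp hmon
    exact ⟨q, hq, hdeg ▸ hn, by rw [symPoly_eq_symLift, hdeg]⟩
  · rintro ⟨q, hq, hdeg, rfl⟩
    exact ⟨_, hdeg, isMonicOfDegree_symPoly hq, symLift_mem_palindromic q _⟩

theorem sym_irreducible_iff (q : Polynomial ℤ) (g : ℕ) (hg : 1 ≤ g)
    (hq : q.Monic) (hdeg : q.natDegree = g) :
    SymplecticallyIrreducible (symPoly q) ↔ Irreducible q := by
  have hq0 : q.natDegree ≠ 0 := by omega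
  have hq1 : q ≠ 1 := fun h => hq0 (h ▸ natDegree_one)
  rw [hq.irreducible_iff_natDegree, SymplecticallyIrreducible, and_iff_right hq1,
    and_iff_right (isSymplecticPoly_iff_exists_symPoly.mpr ⟨q, hq, hq0, rfl⟩)]
  simp only [isSymplecticPoly_iff_exists_symPoly]
  constructor
  · intro h a b ha hb hab
    by_contra! hab0
    exact h ⟨_, _, ⟨a, ha, hab0.1, rfl⟩, ⟨b, hb, hab0.2, rfl⟩, by rw [← symPoly_mul ha hb, hab]⟩
  · rintro h ⟨_, _, ⟨a, ha, ha0, rfl⟩, ⟨b, hb, hb0, rfl⟩, hab⟩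
    rw [← symPoly_mul ha hb, symPoly_inj hq (ha.mul hb)] at hab
    exact (h a b ha hb hab.symm).elim ha0 hb0
end

section
/- Let q ∈ ℤ[x] be monic of degree g ≥ 1. If every complex root of sym(q) is a root of unity, then every complex root of q has absolute value at most 2. -/
open Polynomial

/-!
Every `z ∈ ℂ` can be written as `w + w⁻¹` (solve `w² - z w + 1 = 0`), and then
`sym(q)(w) = w^g · q(z)`. So a root `z` of `q` yields a root `w` of `sym(q)`, which is a root of
unity by hypothesis; hence `‖w‖ = 1` and `‖z‖ ≤ ‖w‖ + ‖w‖⁻¹ = 2`.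
-/

theorem aeval_symPoly {K : Type*} [Field K] (q : ℤ[X]) {w : K} (hw : w ≠ 0) :
    aeval w (symPoly q) = w ^ q.natDegree * aeval (w + w⁻¹) q := by
  rw [symPoly, aeval_eq_sum_range (p := q), map_sum, Finset.mul_sum]
  refine Finset.sum_congr rfl fun i hi => ?_
  have hi : i ≤ q.natDegree := Nat.lt_succ_iff.mp (Finset.mem_range.mp hi)
  have hsq : w ^ 2 + 1 = w * (w + w⁻¹) := by field_simp
  simp only [map_mul, map_pow, map_add, map_one, eq_intCast, map_intCast, aeval_X]
  rw [hsq, mul_pow, ← pow_sub_mul_pow w hi]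
  ring

theorem exists_ne_zero_eq_add_inv {K : Type*} [Field K] [IsAlgClosed K] (z : K) :
    ∃ w ≠ 0, z = w + w⁻¹ := by
  have hdeg : (X ^ 2 - C z * X + 1 : K[X]).degree ≠ 0 := by
    rw [show (X ^ 2 - C z * X + 1 : K[X]).degree = 2 by compute_degree!]
    decide
  obtain ⟨w, hw⟩ := IsAlgClosed.exists_root _ hdeg
  simp only [IsRoot, eval_add, eval_sub, eval_pow, eval_mul, eval_X, eval_C, eval_one] at hw
  have hw0 : w ≠ 0 := by
    rintro rfl
    simp at hw
  refine ⟨w, hw0, ?_⟩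
  field_simp
  linear_combination -hw

theorem norm_add_inv_le_two {𝕜 : Type*} [NormedDivisionRing 𝕜] {w : 𝕜} (hw : ‖w‖ = 1) :
    ‖w + w⁻¹‖ ≤ 2 :=
  calc ‖w + w⁻¹‖ ≤ ‖w‖ + ‖w⁻¹‖ := norm_add_le _ _
    _ = 2 := by rw [norm_inv, hw]; norm_num

theorem roots_bounded_of_sym_roots_of_unity_general (q : Polynomial ℤ)
    (h : ∀ ζ : ℂ, Polynomial.aeval ζ (symPoly q) = 0 → ∃ n : ℕ, 1 ≤ n ∧ ζ ^ n = 1) :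
    ∀ z : ℂ, Polynomial.aeval z q = 0 → ‖z‖ ≤ 2 := by
  intro z hz
  obtain ⟨w, hw0, rfl⟩ := exists_ne_zero_eq_add_inv z
  obtain ⟨n, hn, hwn⟩ := h w (by rw [aeval_symPoly q hw0, hz, mul_zero])
  exact norm_add_inv_le_two (Complex.norm_eq_one_of_pow_eq_one hwn (by omega))

theorem roots_bounded_of_sym_roots_of_unity (q : Polynomial ℤ) (g : ℕ) (hg : 1 ≤ g)
    (hq : q.Monic) (hdeg : q.natDegree = g)
    (h : ∀ ζ : ℂ, Polynomial.aeval ζ (symPoly q) = 0 → ∃ n : ℕ, 1 ≤ n ∧ ζ ^ n = 1) :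
    ∀ z : ℂ, Polynomial.aeval z q = 0 → ‖z‖ ≤ 2 :=
  roots_bounded_of_sym_roots_of_unity_general q h
end

section
/- If q ∈ ℤ[x] is monic of degree g ≥ 1 and the coefficient of x^{g−1} in q is nonzero, then there do not exist an integer k > 1 and a polynomial r ∈ ℤ[x] with sym(q) = r(x^k); that is, sym(q) is not a polynomial in x^k for any k > 1. -/
open Polynomial

lemma coeff_sq_pow (i n : ℕ) :
    (((X : ℤ[X]) ^ 2 + 1) ^ i).coeff n =
      if 2 ∣ n then (((X : ℤ[X]) + 1) ^ i).coeff (n / 2) else 0 := by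
  have h : ((X : ℤ[X]) ^ 2 + 1) ^ i = expand ℤ 2 (((X : ℤ[X]) + 1) ^ i) := by
    simp [map_pow]
  rw [h, coeff_expand (by norm_num)]

lemma coeff_xa_pow (i : ℕ) : (((X : ℤ[X]) + 1) ^ i).coeff i = 1 := by
  have hm : (((X : ℤ[X]) + 1) ^ i).Monic := by
    have : ((X : ℤ[X]) + 1) = X + C 1 := by simp
    rw [this]
    exact (monic_X_add_C 1).pow i
  have hd : (((X : ℤ[X]) + 1) ^ i).natDegree = i := by
    have : ((X : ℤ[X]) + 1) = X + C 1 := by simp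
    rw [this, natDegree_pow, natDegree_X_add_C, mul_one]
  have := hm.coeff_natDegree
  rwa [hd] at this

lemma deg_term_le (a : ℤ) (e i : ℕ) :
    (C a * X ^ e * ((X : ℤ[X]) ^ 2 + 1) ^ i).natDegree ≤ e + 2 * i := by
  refine (natDegree_mul_le).trans ?_
  have h1 : (C a * (X : ℤ[X]) ^ e).natDegree ≤ e := by
    refine (natDegree_mul_le).trans ?_
    simp
  have h2 : (((X : ℤ[X]) ^ 2 + 1) ^ i).natDegree ≤ 2 * i := by
    refine (natDegree_pow_le).trans ?_
    have h3 : ((X : ℤ[X]) ^ 2 + 1).natDegree ≤ 2 := by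
      have : ((X : ℤ[X]) ^ 2 + 1) = X ^ 2 + C 1 := by simp
      rw [this]
      exact (natDegree_X_pow_add_C).le
    calc i * ((X : ℤ[X]) ^ 2 + 1).natDegree ≤ i * 2 := Nat.mul_le_mul_left i h3
      _ = 2 * i := Nat.mul_comm i 2
  exact add_le_add h1 h2

theorem sym_not_poly_in_xk (q : Polynomial ℤ) (g : ℕ) (hg : 1 ≤ g)
    (hq : q.Monic) (hdeg : q.natDegree = g) (hcoeff : q.coeff (g - 1) ≠ 0) :
    ¬ ∃ k : ℕ, 1 < k ∧ ∃ r : Polynomial ℤ,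
        symPoly q = r.comp (Polynomial.X ^ k) := by
  rintro ⟨k, hk, r, hr⟩
  -- coefficient at 2g is 1
  have hqg : q.coeff g = 1 := by
    have := hq.coeff_natDegree
    rwa [hdeg] at this
  have h1 : (symPoly q).coeff (2 * g) = 1 := by
    unfold symPoly
    rw [hdeg, finset_sum_coeff]
    rw [Finset.sum_eq_single g]
    · rw [Nat.sub_self, pow_zero, mul_one, coeff_C_mul, coeff_sq_pow]
      rw [if_pos ⟨g, rfl⟩]
      rw [Nat.mul_div_cancel_left g (by norm_num), coeff_xa_pow, hqg, mul_one]
    · intro i hi hne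
      have hilt : i < g := by
        have := Finset.mem_range.mp hi; omega
      apply coeff_eq_zero_of_natDegree_lt
      calc (C (q.coeff i) * X ^ (g - i) * ((X : ℤ[X]) ^ 2 + 1) ^ i).natDegree
          ≤ (g - i) + 2 * i := deg_term_le _ _ _
        _ < 2 * g := by omega
    · intro h; exact absurd (Finset.self_mem_range_succ g) h
  -- coefficient at 2g - 1 is q.coeff (g-1)
  have h2 : (symPoly q).coeff (2 * g - 1) = q.coeff (g - 1) := by
    unfold symPoly
    rw [hdeg, finset_sum_coeff]
    rw [Finset.sum_eq_single (g - 1)]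
    · have he : g - (g - 1) = 1 := by omega
      rw [he, pow_one, mul_assoc, coeff_C_mul]
      have h21 : 2 * g - 1 = (2 * g - 2) + 1 := by omega
      rw [h21, coeff_X_mul, coeff_sq_pow]
      rw [if_pos ⟨g - 1, by omega⟩]
      have : (2 * g - 2) / 2 = g - 1 := by omega
      rw [this, coeff_xa_pow, mul_one]
    · intro i hi hne
      have hile : i ≤ g := by
        have := Finset.mem_range.mp hi; omega
      rcases eq_or_lt_of_le hile with heq | hlt
      · subst heq
        rw [Nat.sub_self, pow_zero, mul_one, coeff_C_mul, coeff_sq_pow]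
        rw [if_neg (by omega), mul_zero]
      · apply coeff_eq_zero_of_natDegree_lt
        calc (C (q.coeff i) * X ^ (g - i) * ((X : ℤ[X]) ^ 2 + 1) ^ i).natDegree
            ≤ (g - i) + 2 * i := deg_term_le _ _ _
          _ < 2 * g - 1 := by omega
    · intro h
      exact absurd (Finset.mem_range.mpr (by omega)) h
  -- from the comp form, nonzero coefficients are at multiples of k
  have hexp : symPoly q = expand ℤ k r := by
    rw [hr, expand_eq_comp_X_pow]
  have hk0 : 0 < k := by omega
  have hd1 : k ∣ 2 * g := by
    by_contra hnd
    rw [hexp, coeff_expand hk0, if_neg hnd] at h1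
    exact one_ne_zero h1.symm
  have hd2 : k ∣ 2 * g - 1 := by
    by_contra hnd
    rw [hexp, coeff_expand hk0, if_neg hnd] at h2
    exact hcoeff h2.symm
  have : k ∣ 1 := by
    have := Nat.dvd_sub hd1 hd2
    have h21 : 2 * g - (2 * g - 1) = 1 := by omega
    rwa [h21] at this
  have := Nat.le_of_dvd one_pos this
  omega
end

section
/- Let q(x) = x^g + a_{g−1}x^{g−1} + … + a_1x + a_0 ∈ ℤ[x] be irreducible of degree g ≥ 1 with |a_{g−1}| > 2g. Then: (i) sym(q) is symplectically irreducible; (ii) sym(q) has a complex root that is not a root of unity; and (iii) sym(q) is not a polynomial in x^k for any integer k > 1. -/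
/-
In the Laurent polynomials put `u = T + T⁻¹`; then `sym q = T ^ g · q(u)`. Hence `sym` is
multiplicative, and it is injective because `u` is transcendental over `ℤ` (which in turn follows
from `sym q ≠ 0` for `q ≠ 0`). Peeling off the outermost coefficients, a palindromic polynomial of
degree `2n` is `T ^ n · r(u)` with `T ^ m + T ^ (-m)` supplied by the Vieta–Lucas polynomials,
i.e. it is `sym r` with `deg r = n`. So a symplectic factorisation of `sym q` pulls back to a
factorisation of `q` into factors of positive degree.

If `ζ² + 1 = αζ` then `sym q (ζ) = ζ ^ g · q(α)`. The roots of `q` sum to `-a_{g-1}`, so some root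
has `|α| > 2`; a solution `ζ` of `ζ² + 1 = αζ` is then a root of `sym q` with `|ζ| ≠ 1`, since
`|α| = |ζ² + 1| ≤ 2` on the unit circle. Finally, the coefficients of `x ^ (2g)` and
`x ^ (2g - 1)` in `sym q` are `1` and `a_{g-1} ≠ 0`, and `k` would have to divide both exponents.
-/

open Polynomial

open LaurentPolynomial (T invert)
open scoped LaurentPolynomial

namespace Polynomial

theorem ne_comp_X_pow_of_coeff_ne_zero {R : Type*} [CommSemiring R] {p : R[X]} {m : ℕ}
    (hm : p.coeff m ≠ 0) (hm' : p.coeff (m + 1) ≠ 0) {k : ℕ} (hk : 1 < k) (r : R[X]) :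
    p ≠ r.comp (X ^ k) := by
  rintro rfl
  rw [← expand_eq_comp_X_pow] at hm hm'
  have hdvd : ∀ n, (expand R k r).coeff n ≠ 0 → k ∣ n := fun n hn ↦ by
    by_contra h
    exact hn (by rw [coeff_expand (by omega), if_neg h])
  have := (Nat.dvd_add_right (hdvd m hm)).mp (hdvd (m + 1) hm')
  exact absurd (Nat.le_of_dvd one_pos this) (by omega)

theorem exists_isRoot_lt_norm_of_mul_natDegree_lt_norm_nextCoeff {K : Type*} [NormedField K]
    [IsAlgClosed K] {p : K[X]} (hp : p.Monic) {c : ℝ} (h : c * p.natDegree < ‖p.nextCoeff‖) :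
    ∃ α, p.IsRoot α ∧ c < ‖α‖ := by
  by_contra! hroots
  have hsplit := IsAlgClosed.splits p
  refine (h.trans_le ?_).false
  calc ‖p.nextCoeff‖ = ‖p.roots.sum‖ := by
        rw [hsplit.nextCoeff_eq_neg_sum_roots_of_monic hp, norm_neg]
    _ ≤ (p.roots.map (‖·‖)).sum := norm_multiset_sum_le _
    _ ≤ Multiset.card (p.roots.map (‖·‖)) • c :=
        Multiset.sum_le_card_nsmul _ _ fun x hx ↦ by
          obtain ⟨α, hα, rfl⟩ := Multiset.mem_map.mp hx
          exact hroots α (isRoot_of_mem_roots hα)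
    _ = c * p.natDegree := by
        rw [Multiset.card_map, ← splits_iff_card_roots.mp hsplit, nsmul_eq_mul, mul_comm]

section CommSemiring

variable {R : Type*} [CommSemiring R]

theorem coeff_X_sq_add_one_pow_two_mul (n k : ℕ) :
    ((X ^ 2 + 1 : R[X]) ^ n).coeff (2 * k) = n.choose k := by
  have : (X ^ 2 + 1 : R[X]) ^ n = expand R 2 ((X + 1) ^ n) := by simp
  rw [this, mul_comm, coeff_expand_mul two_pos, coeff_X_add_one_pow]

theorem coeff_X_sq_add_one_pow_two_mul_add_one (n k : ℕ) :
    ((X ^ 2 + 1 : R[X]) ^ n).coeff (2 * k + 1) = 0 := by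
  have : (X ^ 2 + 1 : R[X]) ^ n = expand R 2 ((X + 1) ^ n) := by simp
  rw [this, coeff_expand two_pos, if_neg (by omega)]

theorem coeff_C_mul_X_pow_sub_mul_X_sq_add_one_pow_eq_zero (c : R) {g i m : ℕ} (hi : i ≤ g)
    (h : g + i < m) : (C c * X ^ (g - i) * (X ^ 2 + 1) ^ i : R[X]).coeff m = 0 :=
  coeff_eq_zero_of_natDegree_lt <| (show _ ≤ g - i + 2 * i by compute_degree; omega).trans_lt
    (by omega)

end CommSemiring

section CommRing

variable {R : Type*} [CommRing R]

theorem aeval_chebyshevC_T_add_T_neg (n : ℕ) :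
    aeval (T 1 + T (-1) : R[T;T⁻¹]) (Chebyshev.C R n) = T n + T (-n) := by
  rw [aeval_def, eval₂_eq_eval_map, Chebyshev.map_C, ← dickson_one_one_eq_chebyshev_C,
    dickson_one_one_eval_add_inv _ _ (by rw [← LaurentPolynomial.T_add]; simp)]
  simp [LaurentPolynomial.T_pow]

theorem exists_eq_X_mul_add_of_coeff_eq_coeff_sub {p : R[X]} {N : ℕ}
    (hdeg : p.natDegree ≤ N + 2) (hpal : ∀ i ≤ N + 2, p.coeff i = p.coeff (N + 2 - i)) :
    ∃ p' : R[X], p'.natDegree ≤ N ∧ (∀ i ≤ N, p'.coeff i = p'.coeff (N - i)) ∧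
      p = X * p' + C (p.coeff 0) * (X ^ (N + 2) + 1) := by
  set s := p - C (p.coeff 0) * (X ^ (N + 2) + 1)
  have hcoeff : ∀ i, s.divX.coeff i = p.coeff (i + 1) - if i = N + 1 then p.coeff 0 else 0 := by
    intro i
    simp [s, coeff_divX, coeff_X_pow, coeff_one]
  refine ⟨s.divX, ?_, fun i hi ↦ ?_, ?_⟩
  · refine natDegree_le_iff_coeff_eq_zero.mpr fun i hi ↦ ?_
    rw [hcoeff]
    rcases eq_or_ne i (N + 1) with rfl | hne
    · rw [if_pos rfl, hpal 0 (by omega), Nat.sub_zero, sub_self]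
    · rw [if_neg hne, coeff_eq_zero_of_natDegree_lt (by omega), sub_zero]
  · rw [hcoeff, hcoeff, if_neg (by omega), if_neg (by omega), hpal (i + 1) (by omega)]
    congr 2
    omega
  · have : s.coeff 0 = 0 := by simp [s]
    rw [mul_comm, ← add_zero (s.divX * X), ← C_0, ← this, divX_mul_X_add]
    ring

theorem exists_toLaurent_eq_T_mul_aeval (n : ℕ) {p : R[X]} (hdeg : p.natDegree ≤ 2 * n)
    (hpal : ∀ i ≤ 2 * n, p.coeff i = p.coeff (2 * n - i)) :
    ∃ r : R[X], toLaurent p = T n * aeval (T 1 + T (-1) : R[T;T⁻¹]) r := by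
  induction n generalizing p with
  | zero =>
    refine ⟨C (p.coeff 0), ?_⟩
    conv_lhs => rw [eq_C_of_natDegree_le_zero hdeg]
    simp
  | succ n ih =>
    obtain ⟨p', hdeg', hpal', hp⟩ :=
      exists_eq_X_mul_add_of_coeff_eq_coeff_sub (N := 2 * n) hdeg hpal
    obtain ⟨r', hr'⟩ := ih hdeg' hpal'
    refine ⟨r' + C (p.coeff 0) * Chebyshev.C R ((n + 1 : ℕ) : ℤ), ?_⟩
    have h1 : (T 1 * T n : R[T;T⁻¹]) = T (n + 1 : ℕ) := by
      rw [← LaurentPolynomial.T_add]; simp [add_comm]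
    have h2 : (T (n + 1 : ℕ) * T (n + 1 : ℕ) : R[T;T⁻¹]) = T (2 * n + 2 : ℕ) := by
      rw [← LaurentPolynomial.T_add]; congr 1; push_cast; ring
    have h3 : (T (n + 1 : ℕ) * T (-(n + 1 : ℕ)) : R[T;T⁻¹]) = 1 := by
      rw [← LaurentPolynomial.T_add, add_neg_cancel, LaurentPolynomial.T_zero]
    conv_lhs => rw [hp]
    simp only [map_add, map_mul, toLaurent_X, hr', toLaurent_C, toLaurent_X_pow, map_one, aeval_C,
      aeval_chebyshevC_T_add_T_neg, ← LaurentPolynomial.C_eq_algebraMap]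
    linear_combination aeval (T 1 + T (-1) : R[T;T⁻¹]) r' * h1 -
      LaurentPolynomial.C (p.coeff 0) * h2 - LaurentPolynomial.C (p.coeff 0) * h3

end CommRing

end Polynomial

theorem exists_sq_add_one_eq_mul {K : Type*} [Field K] [IsAlgClosed K] (α : K) :
    ∃ ζ : K, ζ ^ 2 + 1 = α * ζ := by
  obtain ⟨ζ, hζ⟩ := IsAlgClosed.exists_root (X ^ 2 - C α * X + 1) (by
    rw [show (X ^ 2 - C α * X + 1 : K[X]).degree = 2 by compute_degree!]; norm_num)
  simp only [IsRoot.def, eval_add, eval_sub, eval_mul, eval_pow, eval_X, eval_C, eval_one] at hζ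
  exact ⟨ζ, by linear_combination hζ⟩

theorem Complex.pow_ne_one_of_sq_add_one_eq_mul {ζ α : ℂ} (h : ζ ^ 2 + 1 = α * ζ)
    (hα : 2 < ‖α‖) {n : ℕ} (hn : n ≠ 0) : ζ ^ n ≠ 1 := by
  intro hζn
  have hζ : ‖ζ‖ = 1 := Complex.norm_eq_one_of_pow_eq_one hζn hn
  refine hα.not_ge ?_
  calc ‖α‖ = ‖α * ζ‖ := by rw [norm_mul, hζ, mul_one]
    _ = ‖ζ ^ 2 + 1‖ := by rw [h]
    _ ≤ ‖ζ‖ ^ 2 + 1 := (norm_add_le _ _).trans_eq (by rw [norm_pow, norm_one])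
    _ = 2 := by rw [hζ]; norm_num

theorem aeval_symPoly_s10 {A : Type*} [CommRing A] (q : ℤ[X]) {ζ α : A} (h : ζ ^ 2 + 1 = α * ζ) :
    aeval ζ (symPoly q) = ζ ^ q.natDegree * aeval α q := by
  rw [symPoly, map_sum, aeval_eq_sum_range, Finset.mul_sum]
  refine Finset.sum_congr rfl fun i hi ↦ ?_
  have hi : i ≤ q.natDegree := Nat.lt_succ_iff.mp (Finset.mem_range.mp hi)
  simp only [map_mul, map_pow, map_add, aeval_X, map_one, h, eq_intCast, map_intCast,
    zsmul_eq_mul]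
  rw [← Nat.sub_add_cancel hi, pow_add]
  simp only [Nat.add_sub_cancel]
  ring

theorem toLaurent_symPoly (q : ℤ[X]) :
    toLaurent (symPoly q) = T q.natDegree * aeval (T 1 + T (-1) : ℤ[T;T⁻¹]) q := by
  have hT : (T 1 : ℤ[T;T⁻¹]) ^ 2 + 1 = (T 1 + T (-1)) * T 1 := by
    rw [add_mul, ← LaurentPolynomial.T_add, ← LaurentPolynomial.T_add, LaurentPolynomial.T_pow,
      neg_add_cancel, LaurentPolynomial.T_zero, Nat.cast_ofNat, mul_one, one_add_one_eq_two]
  have htoLaurent : ∀ p : ℤ[X], toLaurent p = aeval (T 1 : ℤ[T;T⁻¹]) p := fun p ↦ by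
    rw [← Polynomial.toLaurent_X, ← Polynomial.coe_toLaurentAlg, aeval_algHom_apply,
      aeval_X_left_apply]
  rw [htoLaurent]
  -- `aeval_symPoly` uses `algebraInt`, which is only defeq to the `ℤ`-algebra `ℤ[T;T⁻¹]`
  refine (aeval_symPoly_s10 q hT).trans ?_
  rw [LaurentPolynomial.T_pow, mul_one]
  rfl

@[simp]
theorem symPoly_zero : symPoly 0 = 0 := by
  simp [symPoly]

theorem coeff_symPoly_two_mul_natDegree (q : ℤ[X]) :
    (symPoly q).coeff (2 * q.natDegree) = q.leadingCoeff := by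
  rw [symPoly, finsetSum_coeff, Finset.sum_range_succ, Finset.sum_eq_zero fun i hi ↦
    coeff_C_mul_X_pow_sub_mul_X_sq_add_one_pow_eq_zero _ (by simp at hi; omega)
      (by simp at hi; omega)]
  simp [coeff_X_sq_add_one_pow_two_mul]

theorem coeff_symPoly_two_mul_natDegree_sub_one (q : ℤ[X]) (hq : 0 < q.natDegree) :
    (symPoly q).coeff (2 * q.natDegree - 1) = q.coeff (q.natDegree - 1) := by
  obtain ⟨g, hg⟩ : ∃ g, q.natDegree = g + 1 := ⟨_, (Nat.succ_pred_eq_of_pos hq).symm⟩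
  rw [symPoly, finsetSum_coeff, hg, Finset.sum_range_succ, Finset.sum_range_succ,
    Finset.sum_eq_zero fun i hi ↦ coeff_C_mul_X_pow_sub_mul_X_sq_add_one_pow_eq_zero _
      (by simp at hi; omega) (by simp at hi; omega),
    show 2 * (g + 1) - 1 = 2 * g + 1 by omega]
  simp [coeff_X_sq_add_one_pow_two_mul_add_one, mul_assoc, coeff_X_sq_add_one_pow_two_mul]

theorem natDegree_symPoly (q : ℤ[X]) : (symPoly q).natDegree = 2 * q.natDegree := by
  rcases eq_or_ne q 0 with rfl | hq
  · simp
  refine natDegree_eq_of_le_of_coeff_ne_zero ?_ ?_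
  · refine natDegree_sum_le_of_forall_le _ _ fun i hi ↦ ?_
    have hi : i ≤ q.natDegree := Nat.lt_succ_iff.mp (Finset.mem_range.mp hi)
    compute_degree
    omega
  · rwa [coeff_symPoly_two_mul_natDegree, leadingCoeff_ne_zero]

theorem leadingCoeff_symPoly (q : ℤ[X]) : (symPoly q).leadingCoeff = q.leadingCoeff := by
  rw [leadingCoeff, natDegree_symPoly, coeff_symPoly_two_mul_natDegree]

theorem symPoly_eq_zero_iff {q : ℤ[X]} : symPoly q = 0 ↔ q = 0 := by
  rw [← leadingCoeff_eq_zero, leadingCoeff_symPoly, leadingCoeff_eq_zero]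

theorem transcendental_T_add_T_neg : Transcendental ℤ (T 1 + T (-1) : ℤ[T;T⁻¹]) := by
  rw [transcendental_iff]
  intro q hq
  have := toLaurent_symPoly q
  rwa [hq, mul_zero, Polynomial.toLaurent_eq_zero, symPoly_eq_zero_iff] at this

theorem symPoly_injective : Function.Injective symPoly := by
  intro a b h
  have hdeg : a.natDegree = b.natDegree := by
    have := congrArg natDegree h
    rw [natDegree_symPoly, natDegree_symPoly] at this
    omega
  have := congrArg toLaurent h
  rw [toLaurent_symPoly, toLaurent_symPoly, hdeg] at this
  exact (transcendental_iff_injective.mp transcendental_T_add_T_neg)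
    ((LaurentPolynomial.isUnit_T _).mul_left_cancel this)

theorem symPoly_mul_s10 (r s : ℤ[X]) : symPoly (r * s) = symPoly r * symPoly s := by
  rcases eq_or_ne r 0 with rfl | hr
  · simp
  rcases eq_or_ne s 0 with rfl | hs
  · simp
  apply Polynomial.toLaurent_injective
  rw [map_mul, toLaurent_symPoly, toLaurent_symPoly, toLaurent_symPoly, natDegree_mul hr hs,
    map_mul, Nat.cast_add, LaurentPolynomial.T_add]
  ring

theorem reverse_symPoly (q : ℤ[X]) : (symPoly q).reverse = symPoly q := by
  apply Polynomial.toLaurent_injective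
  have hinvert : invert (T 1 + T (-1) : ℤ[T;T⁻¹]) = T 1 + T (-1) := by
    rw [map_add, LaurentPolynomial.invert_T, LaurentPolynomial.invert_T, neg_neg, add_comm]
  rw [LaurentPolynomial.toLaurent_reverse, toLaurent_symPoly, natDegree_symPoly, map_mul,
    LaurentPolynomial.invert_T, ← aeval_algHom_apply, hinvert, mul_right_comm,
    ← LaurentPolynomial.T_add]
  congr 2
  push_cast
  ring

theorem isSymplecticPoly_symPoly {q : ℤ[X]} (hq : q.Monic) (hg : 0 < q.natDegree) :
    IsSymplecticPoly (symPoly q) := by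
  refine ⟨(leadingCoeff_symPoly q).trans hq, ⟨q.natDegree, hg, natDegree_symPoly q⟩, ?_⟩
  intro i hi
  conv_lhs => rw [← reverse_symPoly q]
  rw [coeff_reverse, revAt_le hi]

theorem exists_symPoly_eq {p : ℤ[X]} {n : ℕ} (hdeg : p.natDegree = 2 * n)
    (hpal : ∀ i ≤ p.natDegree, p.coeff i = p.coeff (p.natDegree - i)) :
    ∃ r, symPoly r = p := by
  rcases eq_or_ne p 0 with rfl | hp
  · exact ⟨0, symPoly_zero⟩
  rw [hdeg] at hpal
  obtain ⟨r, hr⟩ := exists_toLaurent_eq_T_mul_aeval n hdeg.le hpal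
  have hX : X ^ n * symPoly r = X ^ r.natDegree * p := by
    apply Polynomial.toLaurent_injective
    simp only [map_mul, toLaurent_X_pow, toLaurent_symPoly, hr]
    ring
  have hr0 : r ≠ 0 := by
    rintro rfl
    simp only [symPoly_zero, mul_zero, natDegree_zero, pow_zero, one_mul] at hX
    exact hp hX.symm
  have hrdeg : r.natDegree = n := by
    have := congrArg natDegree hX
    rw [natDegree_mul (pow_ne_zero _ X_ne_zero) (symPoly_eq_zero_iff.not.mpr hr0),
      natDegree_mul (pow_ne_zero _ X_ne_zero) hp, natDegree_X_pow, natDegree_X_pow,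
      natDegree_symPoly] at this
    omega
  exact ⟨r, mul_left_cancel₀ (pow_ne_zero n X_ne_zero) (hrdeg ▸ hX)⟩

theorem symplecticallyIrreducible_symPoly {q : ℤ[X]} (hq : q.Monic) (hirr : Irreducible q) :
    SymplecticallyIrreducible (symPoly q) := by
  refine ⟨isSymplecticPoly_symPoly hq (hq.natDegree_pos_of_not_isUnit hirr.not_isUnit), ?_⟩
  rintro ⟨p₁, p₂, ⟨-, ⟨n₁, hn₁, hdeg₁⟩, hpal₁⟩, ⟨-, ⟨n₂, hn₂, hdeg₂⟩, hpal₂⟩, hprod⟩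
  obtain ⟨r₁, rfl⟩ := exists_symPoly_eq hdeg₁ hpal₁
  obtain ⟨r₂, rfl⟩ := exists_symPoly_eq hdeg₂ hpal₂
  rw [← symPoly_mul_s10] at hprod
  rw [natDegree_symPoly] at hdeg₁ hdeg₂
  obtain h | h := hirr.isUnit_or_isUnit (symPoly_injective hprod) <;>
    · have := natDegree_eq_zero_of_isUnit h
      omega

theorem exists_aeval_symPoly_eq_zero_and_pow_ne_one {q : ℤ[X]} (hq : q.Monic)
    (hg : 0 < q.natDegree) (hcoeff : (2 * q.natDegree : ℤ) < |q.coeff (q.natDegree - 1)|) :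
    ∃ ζ : ℂ, aeval ζ (symPoly q) = 0 ∧ ∀ n ≠ 0, ζ ^ n ≠ 1 := by
  obtain ⟨α, hα, hα2⟩ := exists_isRoot_lt_norm_of_mul_natDegree_lt_norm_nextCoeff (c := 2)
    (hq.map (algebraMap ℤ ℂ)) (by
      rw [hq.natDegree_map, nextCoeff_map (RingHom.injective_int _),
        nextCoeff_of_natDegree_pos hg, eq_intCast, Complex.norm_intCast]
      exact_mod_cast hcoeff)
  obtain ⟨ζ, hζ⟩ := exists_sq_add_one_eq_mul α
  refine ⟨ζ, ?_, fun n hn ↦ Complex.pow_ne_one_of_sq_add_one_eq_mul hζ hα2 hn⟩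
  rw [aeval_symPoly_s10 q hζ, aeval_def, eval₂_eq_eval_map, hα.eq_zero, mul_zero]

theorem sym_satisfies_homological_criterion (q : Polynomial ℤ) (g : ℕ) (hg : 1 ≤ g)
    (hq : q.Monic) (hdeg : q.natDegree = g) (hirr : Irreducible q)
    (hcoeff : (2 * g : ℤ) < |q.coeff (g - 1)|) :
    SymplecticallyIrreducible (symPoly q) ∧
      (∃ ζ : ℂ, Polynomial.aeval ζ (symPoly q) = 0 ∧ ¬ ∃ n : ℕ, 1 ≤ n ∧ ζ ^ n = 1) ∧
      ¬ ∃ k : ℕ, 1 < k ∧ ∃ r : Polynomial ℤ, symPoly q = r.comp (Polynomial.X ^ k) := by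
  subst hdeg
  refine ⟨symplecticallyIrreducible_symPoly hq hirr, ?_, ?_⟩
  · obtain ⟨ζ, hζ, hζn⟩ := exists_aeval_symPoly_eq_zero_and_pow_ne_one hq hg hcoeff
    exact ⟨ζ, hζ, fun ⟨n, hn, h⟩ ↦ hζn n (by omega) h⟩
  · rintro ⟨k, hk, r, hr⟩
    have hsub : q.coeff (q.natDegree - 1) ≠ 0 := fun h ↦ by
      rw [h, abs_zero] at hcoeff
      omega
    refine ne_comp_X_pow_of_coeff_ne_zero (m := 2 * q.natDegree - 1) ?_ ?_ hk r hr
    · rwa [coeff_symPoly_two_mul_natDegree_sub_one q hg]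
    · rw [Nat.sub_add_cancel (by omega), coeff_symPoly_two_mul_natDegree, hq.leadingCoeff]
      exact one_ne_zero
end

section
/- If p ∈ ℤ[x] is a symplectically irreducible symplectic polynomial and some complex root of p is a root of unity, then every complex root of p is a root of unity. -/
open Polynomial

/-!
Let `ζ` be a root of `p` of order `m`, so its minimal polynomial over `ℤ` is `Φ_m`. For `m ≥ 3`,
`Φ_m` is symplectic: its degree `φ(m)` is even, and it is palindromic because `ζ⁻¹` is again a
primitive `m`-th root of unity. For `m ≤ 2`, `ζ = c = ±1`, and a palindromic polynomial of even
degree vanishing at `c` vanishes there to even order, so `(X - c)²` is a symplectic factor of `p`.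
Either way `p` has a symplectic factor `s` whose roots are roots of unity. The monic cofactor of a
symplectic factor of a symplectic polynomial is `1` or symplectic, so irreducibility forces `p = s`.
-/

theorem IsPrimitiveRoot.cyclotomic_dvd_of_aeval_eq_zero {K : Type*} [Field K] [CharZero K]
    {ζ : K} {m : ℕ} (hζ : IsPrimitiveRoot ζ m) (hm : 0 < m) {f : ℤ[X]} (hf : aeval ζ f = 0) :
    cyclotomic m ℤ ∣ f := by
  rw [cyclotomic_eq_minpoly hζ hm]
  exact minpoly.isIntegrallyClosed_dvd (hζ.isIntegral hm) hf

namespace Polynomial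

variable {R : Type*}

theorem reverse_eq_self_iff [Semiring R] {p : R[X]} :
    p.reverse = p ↔ ∀ i ≤ p.natDegree, p.coeff i = p.coeff (p.natDegree - i) := by
  constructor
  · intro h i hi
    conv_lhs => rw [← h]
    rw [coeff_reverse, revAt_le hi]
  · intro h
    ext i
    rw [coeff_reverse]
    rcases le_or_gt i p.natDegree with hi | hi
    · rw [revAt_le hi, h i hi]
    · rw [revAt_eq_self_of_lt hi]

theorem reverse_eq_self_of_mul_left [CommRing R] [IsDomain R] {s q : R[X]} (hs0 : s ≠ 0)
    (hs : s.reverse = s) (hsq : (s * q).reverse = s * q) : q.reverse = q :=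
  mul_left_cancel₀ hs0 (by rw [← hs, ← reverse_mul_of_domain, hsq, hs])

theorem reverse_X_sub_C [CommRing R] [Nontrivial R] {c : R} (hc : c * c = 1) :
    (X - C c).reverse = -C c * (X - C c) := by
  have hX : (X : R[X]).reverse = 1 := by
    rw [← mul_one X, reverse_X_mul, ← C_1, reverse_C]
  have hcc : C c * C c = (1 : R[X]) := by rw [← C_mul, hc, C_1]
  rw [sub_eq_add_neg, ← C_neg, reverse_add_C, natDegree_X, pow_one, hX, C_neg]
  linear_combination -hcc

theorem sq_X_sub_C_dvd_of_reverse_eq_self [CommRing R] [IsDomain R] [CharZero R] {p : R[X]}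
    {c : R} (hrev : p.reverse = p) (hdeg : Even p.natDegree) (hc : c * c = 1)
    (hroot : p.IsRoot c) : (X - C c) ^ 2 ∣ p := by
  obtain ⟨q, rfl⟩ := dvd_iff_isRoot.mpr hroot
  rcases eq_or_ne q 0 with rfl | hq0
  · simp
  have hq : q = -C c * q.reverse := mul_left_cancel₀ (X_sub_C_ne_zero c) <| by
    conv_lhs => rw [← hrev, reverse_mul_of_domain, reverse_X_sub_C hc]
    ring
  -- at `c = c⁻¹`, `q = -c · rev q` turns into `q(c) = -c ^ (deg q + 1) q(c) = -q(c)`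
  let _ : Invertible c := ⟨c, hc, hc⟩
  have hqrev : q.reverse.eval c * c ^ q.natDegree = q.eval c :=
    eval₂_reverse_mul_pow (RingHom.id R) c q
  have hqc : q.eval c = -c * q.reverse.eval c := by
    conv_lhs => rw [hq]
    simp
  have hpow : c ^ q.natDegree * c = 1 := by
    rw [natDegree_mul (X_sub_C_ne_zero c) hq0, natDegree_X_sub_C, add_comm] at hdeg
    obtain ⟨k, hk⟩ := hdeg
    rw [← pow_succ, hk, ← two_mul, pow_mul, sq, hc, one_pow]
  have hsum : q.eval c + q.eval c = 0 := by
    linear_combination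
      c ^ (q.natDegree + 1) * hqc - c ^ 2 * hqrev - q.eval c * hpow - q.eval c * hc
  obtain ⟨r, rfl⟩ := dvd_iff_isRoot.mpr (add_self_eq_zero.mp hsum)
  exact ⟨r, by ring⟩

theorem reverse_cyclotomic_int {m : ℕ} (hm : 1 < m) :
    (cyclotomic m ℤ).reverse = cyclotomic m ℤ := by
  obtain ⟨ζ, hζ⟩ : ∃ ζ : ℂ, IsPrimitiveRoot ζ m := ⟨_, Complex.isPrimitiveRoot_exp m (by omega)⟩
  let _ : Invertible ζ := invertibleOfNonzero (hζ.ne_zero (by omega))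
  have hcoeff : (cyclotomic m ℤ).coeff 0 = 1 := cyclotomic_coeff_zero ℤ hm
  have hmonic : (cyclotomic m ℤ).reverse.Monic := by
    have htrail : (cyclotomic m ℤ).natTrailingDegree = 0 :=
      natTrailingDegree_eq_zero.mpr (.inr (by simp [hcoeff]))
    rw [Monic, reverse_leadingCoeff, trailingCoeff, htrail, hcoeff]
  have hroot : aeval ζ⁻¹ (cyclotomic m ℤ).reverse = 0 := by
    rw [aeval_def, ← invOf_eq_inv, eval₂_reverse_eq_zero_iff, ← aeval_def]
    exact cyclotomic_eq_minpoly hζ (by omega) ▸ minpoly.aeval ℤ ζ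
  exact eq_of_monic_of_dvd_of_natDegree_le (cyclotomic.monic m ℤ) hmonic
    (hζ.inv.cyclotomic_dvd_of_aeval_eq_zero (by omega) hroot) (reverse_natDegree_le _)

end Polynomial

theorem isSymplecticPoly_iff_s13 {p : ℤ[X]} : IsSymplecticPoly p ↔
    p.Monic ∧ (∃ n : ℕ, 1 ≤ n ∧ p.natDegree = 2 * n) ∧ p.reverse = p := by
  rw [IsSymplecticPoly, reverse_eq_self_iff]

theorem IsSymplecticPoly.of_mul_left {s q : ℤ[X]} (hs : IsSymplecticPoly s)
    (hsq : IsSymplecticPoly (s * q)) (hq1 : q ≠ 1) : IsSymplecticPoly q := by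
  rw [isSymplecticPoly_iff_s13] at hs hsq ⊢
  obtain ⟨hsm, ⟨k, hk1, hk⟩, hsrev⟩ := hs
  obtain ⟨hsqm, ⟨n, -, hn⟩, hsqrev⟩ := hsq
  have hqm : q.Monic := hsm.of_mul_monic_left hsqm
  have hq0 : q.natDegree ≠ 0 := fun h => hq1 (hqm.natDegree_eq_zero.mp h)
  rw [hsm.natDegree_mul hqm] at hn
  exact ⟨hqm, ⟨n - k, by omega, by omega⟩,
    reverse_eq_self_of_mul_left hsm.ne_zero hsrev hsqrev⟩

theorem SymplecticallyIrreducible.eq_of_dvd {p s : ℤ[X]} (hp : SymplecticallyIrreducible p)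
    (hs : IsSymplecticPoly s) (hsp : s ∣ p) : p = s := by
  obtain ⟨q, rfl⟩ := hsp
  by_cases hq1 : q = 1
  · rw [hq1, mul_one]
  · exact (hp.2 ⟨s, q, hs, hs.of_mul_left hp.1 hq1, rfl⟩).elim

theorem isSymplecticPoly_cyclotomic {m : ℕ} (hm : 2 < m) :
    IsSymplecticPoly (cyclotomic m ℤ) := by
  obtain ⟨k, hk⟩ := Nat.totient_even hm
  have hpos := Nat.totient_pos.mpr (by omega : 0 < m)
  refine isSymplecticPoly_iff_s13.mpr
    ⟨cyclotomic.monic m ℤ, ⟨k, by omega, ?_⟩, reverse_cyclotomic_int (by omega)⟩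
  rw [natDegree_cyclotomic]
  omega

theorem isSymplecticPoly_sq_X_sub_C {c : ℤ} (hc : c * c = 1) :
    IsSymplecticPoly ((X - C c) ^ 2) := by
  have hcc : C c * C c = (1 : ℤ[X]) := by rw [← C_mul, hc, C_1]
  refine isSymplecticPoly_iff_s13.mpr ⟨(monic_X_sub_C c).pow 2, ⟨1, le_rfl, ?_⟩, ?_⟩
  · rw [natDegree_pow, natDegree_X_sub_C]
  · rw [sq, reverse_mul_of_domain, reverse_X_sub_C hc]
    linear_combination (X - C c) ^ 2 * hcc

theorem exists_int_eq_of_orderOf_le_two {A : Type*} [Ring A] [NoZeroDivisors A] {ζ : A}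
    (hpos : 0 < orderOf ζ) (hle : orderOf ζ ≤ 2) : ∃ c : ℤ, c * c = 1 ∧ (c : A) = ζ := by
  have hζ2 : ζ * ζ = 1 := by
    rw [← sq, ← orderOf_dvd_iff_pow_eq_one]
    interval_cases orderOf ζ <;> norm_num
  rcases mul_self_eq_one_iff.mp hζ2 with rfl | rfl
  · exact ⟨1, by norm_num, by norm_num⟩
  · exact ⟨-1, by norm_num, by norm_num⟩

theorem exists_isSymplecticPoly_dvd_of_aeval_eq_zero {p : ℤ[X]} (hp : IsSymplecticPoly p)
    {ζ : ℂ} {n : ℕ} (hn : 0 < n) (hζn : ζ ^ n = 1) (hζp : aeval ζ p = 0) :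
    ∃ s : ℤ[X], IsSymplecticPoly s ∧ s ∣ p ∧ s ∣ (X ^ n - 1) ^ 2 := by
  have hprim := IsPrimitiveRoot.orderOf ζ
  have hm0 : 0 < orderOf ζ := (isOfFinOrder_iff_pow_eq_one.mpr ⟨n, hn, hζn⟩).orderOf_pos
  have hX : aeval ζ (X ^ n - 1 : ℤ[X]) = 0 := by simp [hζn]
  rcases lt_or_ge 2 (orderOf ζ) with hm | hm
  · exact ⟨cyclotomic _ ℤ, isSymplecticPoly_cyclotomic hm,
      hprim.cyclotomic_dvd_of_aeval_eq_zero hm0 hζp,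
      (hprim.cyclotomic_dvd_of_aeval_eq_zero hm0 hX).trans (dvd_pow_self _ two_ne_zero)⟩
  obtain ⟨c, hc, rfl⟩ := exists_int_eq_of_orderOf_le_two hm0 hm
  have hroot (f : ℤ[X]) (hf : aeval (c : ℂ) f = 0) : f.IsRoot c := by
    have hcast := aeval_algebraMap_apply_eq_algebraMap_eval (A := ℂ) c f
    rw [algebraMap_int_eq, eq_intCast, eq_intCast, hf] at hcast
    exact_mod_cast hcast.symm
  rw [isSymplecticPoly_iff_s13] at hp
  obtain ⟨-, ⟨k, -, hk⟩, hrev⟩ := hp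
  exact ⟨(X - C c) ^ 2, isSymplecticPoly_sq_X_sub_C hc,
    sq_X_sub_C_dvd_of_reverse_eq_self hrev ⟨k, by omega⟩ hc (hroot p hζp),
    pow_dvd_pow_of_dvd (dvd_iff_isRoot.mpr (hroot _ hX)) 2⟩

theorem all_roots_of_unity (p : Polynomial ℤ) (hp : SymplecticallyIrreducible p)
    (h : ∃ ζ : ℂ, Polynomial.aeval ζ p = 0 ∧ ∃ n : ℕ, 1 ≤ n ∧ ζ ^ n = 1) :
    ∀ ζ : ℂ, Polynomial.aeval ζ p = 0 → ∃ n : ℕ, 1 ≤ n ∧ ζ ^ n = 1 := by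
  obtain ⟨ζ, hζp, n, hn, hζn⟩ := h
  obtain ⟨s, hs, hsp, hsX⟩ := exists_isSymplecticPoly_dvd_of_aeval_eq_zero hp.1 hn hζn hζp
  rw [hp.eq_of_dvd hs hsp]
  intro ξ hξ
  refine ⟨n, hn, ?_⟩
  simpa [sub_eq_zero] using aeval_eq_zero_of_dvd_aeval_eq_zero hsX hξ
end

section
/- Let a, b ∈ ℤ and q(x) = x⁴ + ax³ + bx² + ax + 1. Then the following three conditions hold simultaneously — (i) q is symplectically irreducible, (ii) q has a complex root that is not a root of unity, and (iii) q is not a polynomial in x^k for any integer k > 1 — if and only if a ≠ 0, (a, b) is neither (1, 1) nor (−1, 1), and a² − 4b + 8 is not the square of an integer. -/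
open Polynomial

theorem psq_zero {p : ℕ} (hp : p.Prime) {x y : ℤ} (h : x^2 = (p:ℤ) * y^2) : x = 0 ∧ y = 0 := by
  have hx : x.natAbs ^ 2 = p * y.natAbs ^ 2 := by
    have := congrArg Int.natAbs h
    simpa [Int.natAbs_mul, Int.natAbs_pow] using this
  suffices hy : y.natAbs = 0 by
    have hx0 : x.natAbs = 0 := by
      rw [hy] at hx; simpa [pow_eq_zero_iff] using hx
    exact ⟨Int.natAbs_eq_zero.mp hx0, Int.natAbs_eq_zero.mp hy⟩
  by_contra hy0
  have hxy : x.natAbs ≠ 0 := by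
    intro h0; rw [h0] at hx
    have hx' : p * y.natAbs ^ 2 = 0 := by simpa using hx.symm
    rcases Nat.mul_eq_zero.mp hx' with h'|h'
    · exact hp.ne_zero h'
    · exact hy0 (by simpa [pow_eq_zero_iff] using h')
  have h2 := congrArg (fun n => n.factorization p) hx
  simp only [Nat.factorization_pow, Nat.factorization_mul hp.ne_zero (pow_ne_zero 2 hy0),
    Nat.Prime.factorization_self hp, Finsupp.smul_apply, Finsupp.add_apply,
    Finsupp.single_apply, if_pos rfl, smul_eq_mul] at h2
  omega

theorem rootu_false (a b : ℤ) (ζ : ℂ)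
    (hζq : ζ^4 + (a:ℂ)*ζ^3 + (b:ℂ)*ζ^2 + (a:ℂ)*ζ + 1 = 0)
    {n : ℕ} (hn : 1 ≤ n) (hζn : ζ^n = 1)
    (ha : a ≠ 0) (hab1 : ¬(a = 1 ∧ b = 1)) (hab2 : ¬(a = -1 ∧ b = 1))
    (hnosq : ¬∃ m : ℤ, a^2 - 4*b + 8 = m^2)
    (htot : ∀ d : ℕ, 0 < d → d.totient ≤ 4 →
      d = 1 ∨ d = 2 ∨ d = 3 ∨ d = 4 ∨ d = 5 ∨ d = 6 ∨ d = 8 ∨ d = 10 ∨ d = 12) : False := by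
  have hζ0 : ζ ≠ 0 := by
    intro h0; rw [h0] at hζn; simp [zero_pow (by omega : n ≠ 0)] at hζn
  have hfin : IsOfFinOrder ζ := isOfFinOrder_iff_pow_eq_one.mpr ⟨n, by omega, hζn⟩
  set d := orderOf ζ with hd_def
  have hdpos : 0 < d := hfin.orderOf_pos
  have hζd : ζ ^ d = 1 := pow_orderOf_eq_one ζ
  have hne : ∀ m : ℕ, m ≠ 0 → m < d → ζ ^ m ≠ 1 := fun m hm hlt =>
    pow_ne_one_of_lt_orderOf hm hlt
  have hprim : IsPrimitiveRoot ζ d := IsPrimitiveRoot.orderOf ζ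
  -- totient bound
  have ht4 : d.totient ≤ 4 := by
    set p : ℚ[X] := X^4 + C (a:ℚ) * X^3 + C (b:ℚ) * X^2 + C (a:ℚ) * X + 1 with hp_def
    have hpmon : p.Monic := by rw [hp_def]; monicity!
    have hpdeg : p.natDegree = 4 := by rw [hp_def]; compute_degree!
    have hpev : aeval ζ p = 0 := by
      rw [hp_def]
      simp only [map_add, map_mul, map_pow, aeval_X, aeval_C, map_one, eq_ratCast]
      push_cast
      linear_combination hζq
    have hmin : minpoly ℚ ζ ∣ p := minpoly.dvd ℚ ζ hpev
    rw [← Polynomial.cyclotomic_eq_minpoly_rat hprim hdpos] at hmin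
    have hle := natDegree_le_of_dvd hmin hpmon.ne_zero
    rwa [natDegree_cyclotomic, hpdeg] at hle
  -- inverse helper
  have hinv : ζ * ζ⁻¹ = 1 := mul_inv_cancel₀ hζ0
  rcases htot d hdpos ht4 with hd|hd|hd|hd|hd|hd|hd|hd|hd
  · -- d = 1 : ζ = 1
    have h1 : ζ = 1 := by have := hζd; rw [hd, pow_one] at this; exact this
    rw [h1] at hζq
    have hz : ((2*a + b + 2 : ℤ) : ℂ) = 0 := by push_cast; linear_combination hζq
    have hzz : 2*a + b + 2 = 0 := by exact_mod_cast hz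
    exact hnosq ⟨a + 4, by have hb : b = -2*a - 2 := by omega
                           rw [hb]; ring⟩
  · -- d = 2 : ζ = -1
    have h2 : ζ ^ 2 = 1 := by rw [← hd]; exact hζd
    have h1 : ζ ≠ 1 := by
      have := hne 1 (by norm_num) (by omega); rwa [pow_one] at this
    have hm1 : ζ = -1 := by
      have hfac : (ζ - 1) * (ζ + 1) = 0 := by linear_combination h2
      rcases mul_eq_zero.mp hfac with h|h
      · exact absurd (by linear_combination h) h1
      · linear_combination h
    rw [hm1] at hζq
    have hz : ((b - 2*a + 2 : ℤ) : ℂ) = 0 := by push_cast; linear_combination hζq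
    have hzz : b - 2*a + 2 = 0 := by exact_mod_cast hz
    exact hnosq ⟨a - 4, by have hb : b = 2*a - 2 := by omega
                           rw [hb]; ring⟩
  · -- d = 3
    have h3 : ζ ^ 3 = 1 := by rw [← hd]; exact hζd
    have h1 : ζ ≠ 1 := by
      have := hne 1 (by norm_num) (by omega); rwa [pow_one] at this
    have hω : ζ^2 + ζ + 1 = 0 := by
      have hfac : (ζ - 1) * (ζ^2 + ζ + 1) = 0 := by linear_combination h3
      rcases mul_eq_zero.mp hfac with h|h
      · exact absurd (by linear_combination h) h1
      · exact h
    have hm1 : ζ ≠ -1 := by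
      intro h; rw [h] at h3; norm_num at h3
    have hkey : ((a - b + 1 : ℤ) : ℂ) * (ζ + 1) = 0 := by
      push_cast
      linear_combination hζq - (ζ^2 + ((a:ℂ)-1)*ζ + ((b:ℂ)-(a:ℂ)))*hω
    rcases mul_eq_zero.mp hkey with h|h
    · have hzz : a - b + 1 = 0 := by exact_mod_cast h
      exact hnosq ⟨a - 2, by have hb : b = a + 1 := by omega
                             rw [hb]; ring⟩
    · exact hm1 (by linear_combination h)
  · -- d = 4
    have h4 : ζ ^ 4 = 1 := by rw [← hd]; exact hζd
    have h2 : ζ ^ 2 ≠ 1 := hne 2 (by norm_num) (by omega)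
    have hi : ζ^2 + 1 = 0 := by
      have hfac : (ζ^2 - 1) * (ζ^2 + 1) = 0 := by linear_combination h4
      rcases mul_eq_zero.mp hfac with h|h
      · exact absurd (by linear_combination h) h2
      · exact h
    have hz : ((2 - b : ℤ) : ℂ) = 0 := by
      push_cast
      linear_combination hζq - (ζ^2 + (a:ℂ)*ζ + (b:ℂ) - 1)*hi
    have hzz : (2:ℤ) - b = 0 := by exact_mod_cast hz
    exact hnosq ⟨a, by have hb : b = 2 := by omega
                       rw [hb]; ring⟩
  · -- d = 5
    have h5 : ζ ^ 5 = 1 := by rw [← hd]; exact hζd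
    have h1 : ζ ≠ 1 := by
      have := hne 1 (by norm_num) (by omega); rwa [pow_one] at this
    have hΦ : ζ^4 + ζ^3 + ζ^2 + ζ + 1 = 0 := by
      have hfac : (ζ - 1) * (ζ^4 + ζ^3 + ζ^2 + ζ + 1) = 0 := by linear_combination h5
      rcases mul_eq_zero.mp hfac with h|h
      · exact absurd (by linear_combination h) h1
      · exact h
    have h₂ : ((a:ℂ)-1)*ζ^2 + ((b:ℂ)-1)*ζ + ((a:ℂ)-1) = 0 := by
      have hpre : ζ * (((a:ℂ)-1)*ζ^2 + ((b:ℂ)-1)*ζ + ((a:ℂ)-1)) = 0 := by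
        linear_combination hζq - hΦ
      exact (mul_eq_zero.mp hpre).resolve_left hζ0
    set s : ℂ := ζ + ζ⁻¹ with hs_def
    have hmul' : ζ * s - ζ^2 - 1 = 0 := by rw [hs_def]; linear_combination hinv
    have hs : s^2 + s - 1 = 0 := by
      have h2s : ζ^2 * (s^2 + s - 1) = 0 := by
        linear_combination hΦ + (ζ*s + ζ^2 + 1 + ζ)*hmul'
      exact (mul_eq_zero.mp h2s).resolve_left (pow_ne_zero 2 hζ0)
    have hAs : ((a:ℂ)-1)*s + ((b:ℂ)-1) = 0 := by
      have hpre : ζ * (((a:ℂ)-1)*s + ((b:ℂ)-1)) = 0 := by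
        linear_combination h₂ + ((a:ℂ)-1)*hmul'
      exact (mul_eq_zero.mp hpre).resolve_left hζ0
    have hfinC : (((b-1)^2 - (a-1)*(b-1) - (a-1)^2 : ℤ) : ℂ) = 0 := by
      push_cast
      linear_combination ((a:ℂ)-1)^2 * hs - (((a:ℂ)-1)*s - ((b:ℂ)-1) + ((a:ℂ)-1)) * hAs
    have hZ : (b-1)^2 - (a-1)*(b-1) - (a-1)^2 = 0 := by exact_mod_cast hfinC
    have hsq : (2*(b-1) - (a-1))^2 = (5:ℤ) * (a-1)^2 := by linear_combination 4*hZ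
    have := psq_zero (by norm_num : Nat.Prime 5) hsq
    have ha1 : a = 1 := by omega
    have hb1 : b = 1 := by
      rw [ha1] at hZ; have : (b-1)^2 = 0 := by linear_combination hZ
      have := pow_eq_zero_iff (n := 2) (by norm_num) |>.mp this
      omega
    exact hab1 ⟨ha1, hb1⟩
  · -- d = 6
    have h6 : ζ ^ 6 = 1 := by rw [← hd]; exact hζd
    have h3 : ζ ^ 3 ≠ 1 := hne 3 (by norm_num) (by omega)
    have h2 : ζ ^ 2 ≠ 1 := hne 2 (by norm_num) (by omega)
    have h1 : ζ ≠ 1 := by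
      have := hne 1 (by norm_num) (by omega); rwa [pow_one] at this
    have hm1 : ζ ≠ -1 := by
      intro h; rw [h] at h2; norm_num at h2
    have h3' : ζ^3 = -1 := by
      have hfac : (ζ^3 - 1) * (ζ^3 + 1) = 0 := by linear_combination h6
      rcases mul_eq_zero.mp hfac with h|h
      · exact absurd (by linear_combination h) h3
      · linear_combination h
    have hω : ζ^2 - ζ + 1 = 0 := by
      have hfac : (ζ + 1) * (ζ^2 - ζ + 1) = 0 := by linear_combination h3'
      rcases mul_eq_zero.mp hfac with h|h
      · exact absurd (by linear_combination h) hm1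
      · exact h
    have hkey : ((a + b - 1 : ℤ) : ℂ) * (ζ - 1) = 0 := by
      push_cast
      linear_combination hζq - (ζ^2 + ((a:ℂ)+1)*ζ + ((a:ℂ)+(b:ℂ)))*hω
    rcases mul_eq_zero.mp hkey with h|h
    · have hzz : a + b - 1 = 0 := by exact_mod_cast h
      exact hnosq ⟨a + 2, by have hb : b = 1 - a := by omega
                             rw [hb]; ring⟩
    · exact h1 (by linear_combination h)
  · -- d = 8
    have h8 : ζ ^ 8 = 1 := by rw [← hd]; exact hζd
    have h4 : ζ ^ 4 ≠ 1 := hne 4 (by norm_num) (by omega)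
    have h4' : ζ^4 + 1 = 0 := by
      have hfac : (ζ^4 - 1) * (ζ^4 + 1) = 0 := by linear_combination h8
      rcases mul_eq_zero.mp hfac with h|h
      · exact absurd (by linear_combination h) h4
      · exact h
    have h₂ : (a:ℂ)*ζ^2 + (b:ℂ)*ζ + (a:ℂ) = 0 := by
      have hpre : ζ * ((a:ℂ)*ζ^2 + (b:ℂ)*ζ + (a:ℂ)) = 0 := by
        linear_combination hζq - h4'
      exact (mul_eq_zero.mp hpre).resolve_left hζ0
    have hsqC : ((b^2 - 2*a^2 : ℤ) : ℂ) * ζ^2 = 0 := by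
      push_cast
      linear_combination ((b:ℂ)*ζ - (a:ℂ)*ζ^2 - (a:ℂ))*h₂ + ((a:ℂ))^2*h4'
    have hz : ((b^2 - 2*a^2 : ℤ) : ℂ) = 0 :=
      (mul_eq_zero.mp hsqC).resolve_right (pow_ne_zero 2 hζ0)
    have hZ : b^2 - 2*a^2 = 0 := by exact_mod_cast hz
    have hsq : b^2 = (2:ℤ) * a^2 := by linarith
    have := psq_zero (by norm_num : Nat.Prime 2) hsq
    exact ha this.2
  · -- d = 10
    have h10 : ζ ^ 10 = 1 := by rw [← hd]; exact hζd
    have h5 : ζ ^ 5 ≠ 1 := hne 5 (by norm_num) (by omega)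
    have h2 : ζ ^ 2 ≠ 1 := hne 2 (by norm_num) (by omega)
    have hm1 : ζ ≠ -1 := by
      intro h; rw [h] at h2; norm_num at h2
    have h5' : ζ^5 = -1 := by
      have hfac : (ζ^5 - 1) * (ζ^5 + 1) = 0 := by linear_combination h10
      rcases mul_eq_zero.mp hfac with h|h
      · exact absurd (by linear_combination h) h5
      · linear_combination h
    have hΦ : ζ^4 - ζ^3 + ζ^2 - ζ + 1 = 0 := by
      have hfac : (ζ + 1) * (ζ^4 - ζ^3 + ζ^2 - ζ + 1) = 0 := by linear_combination h5'
      rcases mul_eq_zero.mp hfac with h|h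
      · exact absurd (by linear_combination h) hm1
      · exact h
    have h₂ : ((a:ℂ)+1)*ζ^2 + ((b:ℂ)-1)*ζ + ((a:ℂ)+1) = 0 := by
      have hpre : ζ * (((a:ℂ)+1)*ζ^2 + ((b:ℂ)-1)*ζ + ((a:ℂ)+1)) = 0 := by
        linear_combination hζq - hΦ
      exact (mul_eq_zero.mp hpre).resolve_left hζ0
    set s : ℂ := ζ + ζ⁻¹ with hs_def
    have hmul' : ζ * s - ζ^2 - 1 = 0 := by rw [hs_def]; linear_combination hinv
    have hs : s^2 - s - 1 = 0 := by
      have h2s : ζ^2 * (s^2 - s - 1) = 0 := by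
        linear_combination hΦ + (ζ*s + ζ^2 + 1 - ζ)*hmul'
      exact (mul_eq_zero.mp h2s).resolve_left (pow_ne_zero 2 hζ0)
    have hAs : ((a:ℂ)+1)*s + ((b:ℂ)-1) = 0 := by
      have hpre : ζ * (((a:ℂ)+1)*s + ((b:ℂ)-1)) = 0 := by
        linear_combination h₂ + ((a:ℂ)+1)*hmul'
      exact (mul_eq_zero.mp hpre).resolve_left hζ0
    have hfinC : (((b-1)^2 + (a+1)*(b-1) - (a+1)^2 : ℤ) : ℂ) = 0 := by
      push_cast
      linear_combination ((a:ℂ)+1)^2 * hs - (((a:ℂ)+1)*s - ((b:ℂ)-1) - ((a:ℂ)+1)) * hAs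
    have hZ : (b-1)^2 + (a+1)*(b-1) - (a+1)^2 = 0 := by exact_mod_cast hfinC
    have hsq : (2*(b-1) + (a+1))^2 = (5:ℤ) * (a+1)^2 := by linear_combination 4*hZ
    have := psq_zero (by norm_num : Nat.Prime 5) hsq
    have ha1 : a = -1 := by omega
    have hb1 : b = 1 := by
      rw [ha1] at hZ; have : (b-1)^2 = 0 := by linear_combination hZ
      have := pow_eq_zero_iff (n := 2) (by norm_num) |>.mp this
      omega
    exact hab2 ⟨ha1, hb1⟩
  · -- d = 12
    have h12 : ζ ^ 12 = 1 := by rw [← hd]; exact hζd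
    have h6 : ζ ^ 6 ≠ 1 := hne 6 (by norm_num) (by omega)
    have h4 : ζ ^ 4 ≠ 1 := hne 4 (by norm_num) (by omega)
    have hi2 : ζ^2 + 1 ≠ 0 := by
      intro h
      exact h4 (by linear_combination (ζ^2 - 1) * h)
    have hΦ : ζ^4 - ζ^2 + 1 = 0 := by
      have hfac : (ζ^6 - 1) * ((ζ^2 + 1) * (ζ^4 - ζ^2 + 1)) = 0 := by linear_combination h12
      rcases mul_eq_zero.mp hfac with h|h
      · exact absurd (by linear_combination h) h6
      · exact (mul_eq_zero.mp h).resolve_left hi2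
    have h' : (a:ℂ)*ζ^3 + ((b:ℂ)+1)*ζ^2 + (a:ℂ)*ζ = 0 := by
      linear_combination hζq - hΦ
    have h'' : (((b+1)^2 - 3*a^2 : ℤ) : ℂ) * ζ^4 = 0 := by
      push_cast
      linear_combination (-((a:ℂ)*ζ^3 - ((b:ℂ)+1)*ζ^2 + (a:ℂ)*ζ)) * h' + ((a:ℂ))^2*ζ^2 * hΦ
    have hz : (((b+1)^2 - 3*a^2 : ℤ) : ℂ) = 0 :=
      (mul_eq_zero.mp h'').resolve_right (pow_ne_zero 4 hζ0)
    have hZ : (b+1)^2 - 3*a^2 = 0 := by exact_mod_cast hz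
    have hsq : (b+1)^2 = (3:ℤ) * a^2 := by linarith
    have := psq_zero (by norm_num : Nat.Prime 3) hsq
    exact ha this.2


theorem tot_le_four {d : ℕ} (hd : 0 < d) (h : d.totient ≤ 4) :
    d = 1 ∨ d = 2 ∨ d = 3 ∨ d = 4 ∨ d = 5 ∨ d = 6 ∨ d = 8 ∨ d = 10 ∨ d = 12 := by
  have hdvd : d ∣ 120 := by
    rw [← Nat.factorization_le_iff_dvd hd.ne' (by norm_num)]
    intro p
    by_cases hp : p.Prime
    · set k := d.factorization p with hk
      rcases Nat.eq_zero_or_pos k with hk0 | hk1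
      · simp [← hk, hk0]
      · have hpk : p ^ k ∣ d := Nat.ordProj_dvd d p
        have htd : (p ^ k).totient ∣ d.totient := Nat.totient_dvd_of_dvd hpk
        have htp : (p ^ k).totient = p ^ (k - 1) * (p - 1) := Nat.totient_prime_pow hp hk1
        have hle : (p ^ k).totient ≤ 4 :=
          le_trans (Nat.le_of_dvd (by simpa [Nat.totient_pos] using hd) htd) h
        rw [htp] at hle
        have hp1 : p - 1 ≤ 4 := le_trans (Nat.le_mul_of_pos_left _ (pow_pos hp.pos _)) hle
        have hp5 : p ≤ 5 := by omega
        have hppos := hp.two_le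
        have key : p ^ k ∣ 120 := by
          interval_cases p
          · have hkle : k ≤ 3 := by
              by_contra hk3
              have : (2:ℕ)^3 ≤ 2^(k-1) := Nat.pow_le_pow_right (by norm_num) (by omega)
              omega
            exact dvd_trans (pow_dvd_pow 2 hkle) (by norm_num)
          · have hkle : k ≤ 1 := by
              by_contra hk3
              have : (3:ℕ)^1 ≤ 3^(k-1) := Nat.pow_le_pow_right (by norm_num) (by omega)
              omega
            exact dvd_trans (pow_dvd_pow 3 hkle) (by norm_num)
          · exact absurd hp (by decide)
          · have hkle : k ≤ 1 := by
              by_contra hk3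
              have : (5:ℕ)^1 ≤ 5^(k-1) := Nat.pow_le_pow_right (by norm_num) (by omega)
              omega
            exact dvd_trans (pow_dvd_pow 5 hkle) (by norm_num)
        exact (Nat.Prime.pow_dvd_iff_le_factorization hp (by norm_num)).mp key
    · simp [Nat.factorization_eq_zero_of_not_prime _ hp]
  have hle : d ≤ 120 := Nat.le_of_dvd (by norm_num) hdvd
  interval_cases d <;> revert h hdvd <;> decide

lemma symp_quad (c : ℤ) : IsSymplecticPoly (X^2 + C c * X + 1) := by
  have hdeg : (X^2 + C c * X + 1 : ℤ[X]).natDegree = 2 := by compute_degree!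
  refine ⟨by monicity!, ⟨1, le_refl 1, by rw [hdeg]⟩, ?_⟩
  intro i hi
  rw [hdeg] at hi ⊢
  have hc0 : (X^2 + C c * X + 1 : ℤ[X]).coeff 0 = 1 := by
    simp only [coeff_add, coeff_C_mul, coeff_X_pow, coeff_X, coeff_one]; norm_num
  have hc2 : (X^2 + C c * X + 1 : ℤ[X]).coeff 2 = 1 := by
    simp only [coeff_add, coeff_C_mul, coeff_X_pow, coeff_X, coeff_one]; norm_num
  interval_cases i
  · rw [hc0, hc2]
  · rfl
  · rw [hc0, hc2]


theorem genus_two_criterion (a b : ℤ) (q : Polynomial ℤ)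
    (hq : q = Polynomial.X ^ 4 + Polynomial.C a * Polynomial.X ^ 3 +
      Polynomial.C b * Polynomial.X ^ 2 + Polynomial.C a * Polynomial.X + 1) :
    (SymplecticallyIrreducible q ∧
        (∃ ζ : ℂ, Polynomial.aeval ζ q = 0 ∧ ¬ ∃ n : ℕ, 1 ≤ n ∧ ζ ^ n = 1) ∧
        ¬ ∃ k : ℕ, 1 < k ∧ ∃ r : Polynomial ℤ, q = r.comp (Polynomial.X ^ k)) ↔
      (a ≠ 0 ∧ ¬(a = 1 ∧ b = 1) ∧ ¬(a = -1 ∧ b = 1) ∧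
        ¬ ∃ m : ℤ, a ^ 2 - 4 * b + 8 = m ^ 2) := by
  have hdeg : q.natDegree = 4 := by rw [hq]; compute_degree!
  have hmon : q.Monic := by rw [hq]; monicity!
  have hc0 : q.coeff 0 = 1 := by
    simp only [hq, coeff_add, coeff_C_mul, coeff_X_pow, coeff_X, coeff_one]; norm_num
  have hc1 : q.coeff 1 = a := by
    simp only [hq, coeff_add, coeff_C_mul, coeff_X_pow, coeff_X, coeff_one]; norm_num
  have hc2 : q.coeff 2 = b := by
    simp only [hq, coeff_add, coeff_C_mul, coeff_X_pow, coeff_X, coeff_one]; norm_num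
  have hc3 : q.coeff 3 = a := by
    simp only [hq, coeff_add, coeff_C_mul, coeff_X_pow, coeff_X, coeff_one]; norm_num
  have hc4 : q.coeff 4 = 1 := by
    simp only [hq, coeff_add, coeff_C_mul, coeff_X_pow, coeff_X, coeff_one]; norm_num
  have hev : ∀ z : ℂ, aeval z q = z^4 + (a:ℂ)*z^3 + (b:ℂ)*z^2 + (a:ℂ)*z + 1 := by
    intro z; simp [hq]
  have hsym : IsSymplecticPoly q := by
    refine ⟨hmon, ⟨2, by norm_num, by rw [hdeg]⟩, ?_⟩
    intro i hi
    rw [hdeg] at hi ⊢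
    interval_cases i <;> simp [hc0, hc1, hc2, hc3, hc4]
  constructor
  · rintro ⟨⟨-, hirr⟩, ⟨ζ, hζ, hζu⟩, hcomp⟩
    have hζq : ζ^4 + (a:ℂ)*ζ^3 + (b:ℂ)*ζ^2 + (a:ℂ)*ζ + 1 = 0 := by
      rw [← hev ζ]; exact hζ
    refine ⟨?_, ?_, ?_, ?_⟩
    · -- a ≠ 0
      intro ha0
      apply hcomp
      refine ⟨2, by norm_num, X^2 + C b * X + 1, ?_⟩
      rw [hq, ha0]
      simp only [add_comp, mul_comp, X_comp, C_comp, one_comp, pow_comp, map_zero]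
      ring
    · rintro ⟨ha1, hb1⟩
      apply hζu
      refine ⟨5, by norm_num, ?_⟩
      rw [ha1, hb1] at hζq
      push_cast at hζq
      linear_combination (ζ - 1) * hζq
    · rintro ⟨ha1, hb1⟩
      apply hζu
      refine ⟨10, by norm_num, ?_⟩
      rw [ha1, hb1] at hζq
      push_cast at hζq
      linear_combination ((ζ^5 - 1) * (ζ + 1)) * hζq
    · rintro ⟨m, hm⟩
      apply hirr
      -- construct symplectic factorization
      have heven : Even (a + m) := by
        by_contra hodd
        rw [Int.not_even_iff_odd] at hodd
        have hodd2 : Odd (a - m) := by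
          rcases hodd with ⟨k, hk⟩
          exact ⟨k - m, by omega⟩
        have hoddp : Odd ((a + m) * (a - m)) := hodd.mul hodd2
        have heq : (a + m) * (a - m) = 4 * b - 8 := by linear_combination hm
        rw [heq] at hoddp
        rcases hoddp with ⟨k, hk⟩
        omega
      obtain ⟨c, hc⟩ := heven
      have hmc : m = 2 * c - a := by omega
      have hcd : c * (a - c) = b - 2 := by
        apply mul_left_cancel₀ (a := (4:ℤ)) (by norm_num)
        rw [hmc] at hm
        linear_combination hm
      refine ⟨X^2 + C c * X + 1, X^2 + C (a - c) * X + 1, symp_quad c, symp_quad (a - c), ?_⟩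
      rw [hq]
      have h1 : C a = C c + C (a - c) := by rw [← C_add]; ring_nf
      have h2 : C b = C c * C (a - c) + 2 := by
        rw [← C_mul, hcd]; norm_num
      rw [h1, h2]
      ring
  · rintro ⟨ha, hab1, hab2, hnosq⟩
    refine ⟨⟨hsym, ?_⟩, ?_, ?_⟩
    · -- symplectically irreducible
      rintro ⟨p₁, p₂, h1, h2, hmul⟩
      obtain ⟨hm1, ⟨n1, hn1, hd1⟩, hp1⟩ := h1
      obtain ⟨hm2, ⟨n2, hn2, hd2⟩, hp2⟩ := h2
      have hdd : p₁.natDegree + p₂.natDegree = 4 := by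
        rw [← natDegree_mul hm1.ne_zero hm2.ne_zero, ← hmul, hdeg]
      have hd1' : p₁.natDegree = 2 := by omega
      have hd2' : p₂.natDegree = 2 := by omega
      have e12 : p₁.coeff 2 = 1 := by have := hm1.coeff_natDegree; rwa [hd1'] at this
      have e22 : p₂.coeff 2 = 1 := by have := hm2.coeff_natDegree; rwa [hd2'] at this
      have e10 : p₁.coeff 0 = 1 := by
        have := hp1 0 (by omega); rw [hd1'] at this; simpa [e12] using this
      have e20 : p₂.coeff 0 = 1 := by
        have := hp2 0 (by omega); rw [hd2'] at this; simpa [e22] using this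
      have e13 : p₁.coeff 3 = 0 := coeff_eq_zero_of_natDegree_lt (by omega)
      have e23 : p₂.coeff 3 = 0 := coeff_eq_zero_of_natDegree_lt (by omega)
      set c := p₁.coeff 1 with hcdef
      set d := p₂.coeff 1 with hddef
      have hsum : a = c + d := by
        rw [← hc3, hmul, coeff_mul]
        rw [Finset.Nat.sum_antidiagonal_eq_sum_range_succ_mk]
        simp [Finset.sum_range_succ, e12, e22, e10, e20, e13, e23]
        try ring
      have hprod : b = c * d + 2 := by
        rw [← hc2, hmul, coeff_mul]
        rw [Finset.Nat.sum_antidiagonal_eq_sum_range_succ_mk]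
        simp [Finset.sum_range_succ, e12, e22, e10, e20, e13, e23]
        try ring
      exact hnosq ⟨c - d, by rw [hsum, hprod]; ring⟩
    · -- exists non-root-of-unity root
      have hmapmon : (q.map (algebraMap ℤ ℂ)).Monic := hmon.map _
      have hmapdeg : (q.map (algebraMap ℤ ℂ)).natDegree = 4 := by
        rw [hmon.natDegree_map, hdeg]
      have hdegpos : 0 < (q.map (algebraMap ℤ ℂ)).degree := by
        exact natDegree_pos_iff_degree_pos.mp (by rw [hmapdeg]; norm_num)
      obtain ⟨ζ, hζroot⟩ := Complex.exists_root hdegpos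
      have hζ : aeval ζ q = 0 := by
        rw [aeval_def, ← eval_map]; exact hζroot
      refine ⟨ζ, hζ, ?_⟩
      rintro ⟨n, hn, hζn⟩
      have hζq : ζ^4 + (a:ℂ)*ζ^3 + (b:ℂ)*ζ^2 + (a:ℂ)*ζ + 1 = 0 := by
        rw [← hev ζ]; exact hζ
      exact rootu_false a b ζ hζq hn hζn ha hab1 hab2 hnosq (fun d hd h4 => tot_le_four hd h4)
    · -- not a polynomial in x^k
      rintro ⟨k, hk, r, hcomp⟩
      have hkpos : 0 < k := by omega
      have hexp : q = expand ℤ k r := by rw [expand_eq_comp_X_pow, hcomp]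
      have h3 : k ∣ 3 := by
        by_contra hk3
        rw [hexp, coeff_expand hkpos, if_neg hk3] at hc3
        exact ha hc3.symm
      have h4 : k ∣ 4 := by
        by_contra hk4
        rw [hexp, coeff_expand hkpos, if_neg hk4] at hc4
        norm_num at hc4
      have hk3 : k = 1 ∨ k = 3 := (Nat.dvd_prime (by norm_num)).mp h3
      rcases hk3 with h|h
      · omega
      · rw [h] at h4; norm_num at h4
end

section
/- Let a, b ∈ ℤ. The polynomial x⁴ + ax³ + bx² + ax + 1 is the product of two symplectic polynomials if and only if a² − 4b + 8 is the square of an integer. -/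
open Polynomial

set_option linter.unnecessarySeqFocus false

lemma quad_natDegree (c : ℤ) : (X ^ 2 + C c * X + 1 : Polynomial ℤ).natDegree = 2 := by
  compute_degree!

lemma quad_symplectic (c : ℤ) : IsSymplecticPoly (X ^ 2 + C c * X + 1) := by
  have hdeg := quad_natDegree c
  refine ⟨?_, ⟨1, le_refl 1, by rw [hdeg]⟩, ?_⟩
  · unfold Polynomial.Monic Polynomial.leadingCoeff
    rw [hdeg]
    simp only [coeff_add, coeff_C_mul, coeff_X_pow, coeff_one, coeff_X, coeff_C]; norm_num
  · intro i hi
    rw [hdeg] at hi ⊢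
    interval_cases i <;>
      simp only [coeff_add, coeff_C_mul, coeff_X_pow, coeff_one, coeff_X, coeff_C] <;> norm_num

lemma symp_deg_two_eq (p : Polynomial ℤ) (hp : IsSymplecticPoly p)
    (hd : p.natDegree = 2) : p = X ^ 2 + C (p.coeff 1) * X + 1 := by
  obtain ⟨hm, -, hpal⟩ := hp
  have h2 : p.coeff 2 = 1 := by
    have := hm.leadingCoeff
    rwa [Polynomial.leadingCoeff, hd] at this
  have h0 : p.coeff 0 = 1 := by
    have := hpal 0 (by omega)
    rw [hd] at this
    simpa [h2] using this
  ext i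
  simp only [coeff_add, coeff_C_mul, coeff_X_pow, coeff_one, coeff_X, coeff_C]
  match i with
  | 0 => norm_num [h0]
  | 1 => norm_num
  | 2 => norm_num [h2]
  | (n + 3) =>
    rw [Polynomial.coeff_eq_zero_of_natDegree_lt (by omega)]
    have h1 : ¬ (n + 3 = 2) := by omega
    have h2' : ¬ ((1 : ℕ) = n + 3) := by omega
    have h3 : ¬ (n + 3 = 0) := by omega
    simp [h1, h2', h3]

theorem genus_two_reducibility (a b : ℤ) (q : Polynomial ℤ)
    (hq : q = Polynomial.X ^ 4 + Polynomial.C a * Polynomial.X ^ 3 +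
      Polynomial.C b * Polynomial.X ^ 2 + Polynomial.C a * Polynomial.X + 1) :
    (∃ p₁ p₂ : Polynomial ℤ, IsSymplecticPoly p₁ ∧ IsSymplecticPoly p₂ ∧ q = p₁ * p₂) ↔
      ∃ m : ℤ, a ^ 2 - 4 * b + 8 = m ^ 2 := by
  have hqdeg : q.natDegree = 4 := by rw [hq]; compute_degree!
  constructor
  · rintro ⟨p₁, p₂, h₁, h₂, heq⟩
    obtain ⟨hm₁, ⟨n₁, hn₁, hd₁⟩, -⟩ := id h₁
    obtain ⟨hm₂, ⟨n₂, hn₂, hd₂⟩, -⟩ := id h₂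
    have hmul : p₁.natDegree + p₂.natDegree = 4 := by
      rw [← Polynomial.natDegree_mul hm₁.ne_zero hm₂.ne_zero, ← heq, hqdeg]
    have hd₁' : p₁.natDegree = 2 := by omega
    have hd₂' : p₂.natDegree = 2 := by omega
    set c := p₁.coeff 1 with hc
    set d := p₂.coeff 1 with hd
    have hp₁ := symp_deg_two_eq p₁ h₁ hd₁'
    have hp₂ := symp_deg_two_eq p₂ h₂ hd₂'
    have hprod : q = X ^ 4 + C (c + d) * X ^ 3 + C (c * d + 2) * X ^ 2 +
        C (c + d) * X + 1 := by
      rw [heq, hp₁, hp₂, ← hc, ← hd]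
      simp only [map_add, map_mul, map_ofNat]
      ring
    have ha : a = c + d := by
      have := congrArg (fun p => Polynomial.coeff p 3) (hq ▸ hprod)
      simp only [coeff_add, coeff_C_mul, coeff_X_pow, coeff_one, coeff_X, coeff_C] at this
      norm_num at this
      linarith
    have hb : b = c * d + 2 := by
      have := congrArg (fun p => Polynomial.coeff p 2) (hq ▸ hprod)
      simp only [coeff_add, coeff_C_mul, coeff_X_pow, coeff_one, coeff_X, coeff_C] at this
      norm_num at this
      linarith
    exact ⟨c - d, by rw [ha, hb]; ring⟩
  · rintro ⟨m, hm⟩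
    have hprod : (a + m) * (a - m) = 4 * (b - 2) := by linear_combination hm
    have heven : Even (a + m) := by
      rcases Int.even_or_odd (a + m) with h | h
      · exact h
      · exfalso
        have h' : Odd (a - m) := by
          obtain ⟨k, hk⟩ := h
          exact ⟨k - m, by omega⟩
        have := h.mul h'
        rw [hprod] at this
        obtain ⟨t, ht⟩ := this
        omega
    obtain ⟨c, hc⟩ := heven
    set d := a - c with hdd
    have ha : a = c + d := by omega
    have hb : b = c * d + 2 := by
      have h1 : a + m = 2 * c := by omega
      have h2 : a - m = 2 * d := by omega
      rw [h1, h2] at hprod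
      nlinarith [hprod]
    refine ⟨X ^ 2 + C c * X + 1, X ^ 2 + C d * X + 1,
      quad_symplectic c, quad_symplectic d, ?_⟩
    rw [hq, ha, hb]
    simp only [map_add, map_mul, map_ofNat]
    ring
end

section
/- Let g ≥ 1. For every t ∈ ℤ and every 1 ≤ i ≤ g, the matrices E_i(t) and W_i are symplectic with respect to J, where for 1 ≤ i ≤ g−1, E_i(t) is the 2g×2g identity matrix modified to have entry t in positions (i, i+1) and (2g−i, 2g−i+1), and W_i is the identity modified to have entries W_i(i, i+1) = −1, W_i(i+1, i) = 1, W_i(2g−i, 2g−i+1) = −1, W_i(2g−i+1, 2g−i) = 1 and diagonal entries 0 in positions i, i+1, 2g−i, 2g−i+1; E_g(t) is the identity modified to have entry t in position (g, g+1), and W_g is the identity modified to have W_g(g, g+1) = −1, W_g(g+1, g) = 1 and diagonal entries 0 in positions g, g+1. -/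
open Polynomial Matrix

/-- The `2g×2g` matrix with `(i, 2g+1−i)` entry `(−1)^{i+1}` (1-indexed) and 0 elsewhere. -/
def Jmat (g : ℕ) : Matrix (Fin (2 * g)) (Fin (2 * g)) ℤ :=
  Matrix.of fun (i j : Fin (2 * g)) =>
    if (i : ℕ) + (j : ℕ) = 2 * g - 1 then (-1 : ℤ) ^ (i : ℕ) else 0

/-- The identity modified to have entry `t` in (1-indexed) positions `(i, i+1)` and
`(2g−i, 2g−i+1)` (these coincide when `i = g`). -/
def Emat (g i : ℕ) (t : ℤ) : Matrix (Fin (2 * g)) (Fin (2 * g)) ℤ :=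
  Matrix.of fun (a b : Fin (2 * g)) =>
    (if (a : ℕ) = (b : ℕ) then 1 else 0) +
      (if ((a : ℕ) + 1 = i ∧ (b : ℕ) + 1 = i + 1) ∨
          ((a : ℕ) + 1 = 2 * g - i ∧ (b : ℕ) + 1 = 2 * g - i + 1) then t else 0)

/-- The identity modified to have (1-indexed) entries `−1` at `(i, i+1)` and `(2g−i, 2g−i+1)`,
`1` at `(i+1, i)` and `(2g−i+1, 2g−i)`, and `0` on the diagonal in positions
`i`, `i+1`, `2g−i`, `2g−i+1`. -/
def Wmat (g i : ℕ) : Matrix (Fin (2 * g)) (Fin (2 * g)) ℤ :=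
  Matrix.of fun (a b : Fin (2 * g)) =>
    if ((a : ℕ) + 1 = i ∧ (b : ℕ) + 1 = i + 1) ∨
        ((a : ℕ) + 1 = 2 * g - i ∧ (b : ℕ) + 1 = 2 * g - i + 1) then -1
    else if ((a : ℕ) + 1 = i + 1 ∧ (b : ℕ) + 1 = i) ∨
        ((a : ℕ) + 1 = 2 * g - i + 1 ∧ (b : ℕ) + 1 = 2 * g - i) then 1
    else if (a : ℕ) = (b : ℕ) ∧ (a : ℕ) + 1 ≠ i ∧ (a : ℕ) + 1 ≠ i + 1 ∧
        (a : ℕ) + 1 ≠ 2 * g - i ∧ (a : ℕ) + 1 ≠ 2 * g - i + 1 then 1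
    else 0


/-!
`Emat g i t = 1 + t • N` with `N = Nmat g i` square-zero and `Jmat g * N` symmetric. Since `J`
is antisymmetric, for any such `A` the cross terms of `(1 + A)ᵀ J (1 + A)` cancel and the
quadratic term is `-J A² = 0`. `Wmat g i` is a quarter-turn in one or two coordinate planes and
factors into three such shears, `(1 - N) (1 + Nᵀ) (1 - N)`, just as
`[[0, -1], [1, 0]] = [[1, -1], [0, 1]] [[1, 0], [1, 1]] [[1, -1], [0, 1]]`.
-/

section IsSymplectic

variable {n R : Type*} [Fintype n] [CommRing R]

def IsSymplectic (J A : Matrix n n R) : Prop :=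
  Aᵀ * J * A = J

theorem IsSymplectic.mul {J X Y : Matrix n n R} (hX : IsSymplectic J X) (hY : IsSymplectic J Y) :
    IsSymplectic J (X * Y) :=
  calc (X * Y)ᵀ * J * (X * Y) = Yᵀ * (Xᵀ * J * X) * Y := by
        simp only [transpose_mul, Matrix.mul_assoc]
    _ = J := by rw [hX, hY]

theorem isSymplectic_one_add [DecidableEq n] {J A : Matrix n n R} (hJ : Jᵀ = -J)
    (hA : (J * A).IsSymm) (hA2 : A * A = 0) : IsSymplectic J (1 + A) := by
  have hAJ : Aᵀ * J = -(J * A) := by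
    rw [← hA.eq, transpose_mul, hJ, Matrix.mul_neg, neg_neg]
  calc (1 + A)ᵀ * J * (1 + A) = J + Aᵀ * J * (1 + A) + J * A := by
        rw [transpose_add, transpose_one]; noncomm_ring
    _ = J := by
        rw [hAJ, Matrix.neg_mul, Matrix.mul_add, Matrix.mul_one, Matrix.mul_assoc, hA2,
          Matrix.mul_zero]
        abel

end IsSymplectic

theorem one_sub_mul_one_add_mul_one_sub {R : Type*} [Ring R] {A B : R} (hA2 : A * A = 0)
    (hABA : A * B * A = A) : (1 - A) * (1 + B) * (1 - A) = 1 - A + B - A * B - B * A := by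
  have : (1 - A) * (1 + B) * (1 - A) = 1 - A + B - A * B - B * A + A * A + (A * B * A - A) := by
    noncomm_ring
  rw [this, hA2, hABA]; abel

section Jmat

variable {g : ℕ}

theorem Jmat_apply (a b : Fin (2 * g)) :
    Jmat g a b = if b = a.rev then (-1) ^ (a : ℕ) else 0 := by
  have := a.isLt
  simp only [Jmat, of_apply, Fin.ext_iff, Fin.val_rev]
  exact if_congr (by omega) rfl rfl

theorem Jmat_transpose : (Jmat g)ᵀ = -Jmat g := by
  ext a b
  rw [transpose_apply, neg_apply, Jmat_apply, Jmat_apply]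
  by_cases h : b = a.rev
  · subst h
    rw [if_pos a.rev_rev.symm, if_pos rfl,
      neg_one_pow_congr (m := a) (n := a.rev + 1) (by simp only [Nat.even_iff, Fin.val_rev]; omega),
      pow_succ]
    ring
  · rw [if_neg fun h' => h (by rw [h', Fin.rev_rev]), if_neg h, neg_zero]

theorem Jmat_mul_apply (M : Matrix (Fin (2 * g)) (Fin (2 * g)) ℤ) (a b : Fin (2 * g)) :
    (Jmat g * M) a b = (-1) ^ (a : ℕ) * M a.rev b := by
  simp [mul_apply, Jmat_apply]

end Jmat

def Nmat (g i : ℕ) : Matrix (Fin (2 * g)) (Fin (2 * g)) ℤ :=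
  Matrix.of fun (a b : Fin (2 * g)) =>
    if ((a : ℕ) + 1 = i ∧ (b : ℕ) + 1 = i + 1) ∨
        ((a : ℕ) + 1 = 2 * g - i ∧ (b : ℕ) + 1 = 2 * g - i + 1) then 1 else 0

section Nmat

variable {g i : ℕ}

theorem Emat_eq_one_add_smul_Nmat (t : ℤ) : Emat g i t = 1 + t • Nmat g i := by
  ext a b
  simp only [Emat, Nmat, of_apply, Matrix.add_apply, Matrix.smul_apply, one_apply, Fin.ext_iff,
    smul_eq_mul, mul_ite, mul_one, mul_zero]

theorem Nmat_mul_apply (M : Matrix (Fin (2 * g)) (Fin (2 * g)) ℤ) (a b : Fin (2 * g)) :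
    (Nmat g i * M) a b =
      if h : ((a : ℕ) + 1 = i ∨ (a : ℕ) + 1 = 2 * g - i) ∧ (a : ℕ) + 1 < 2 * g then
        M ⟨a + 1, h.2⟩ b
      else 0 := by
  rw [mul_apply]
  split_ifs with h
  · rw [Finset.sum_eq_single ⟨a + 1, h.2⟩]
    · simp [Nmat]; omega
    · intro d _ hd
      simp only [Nmat, of_apply, ne_eq, Fin.ext_iff] at hd ⊢
      rw [if_neg (by omega), zero_mul]
    · simp
  · refine Finset.sum_eq_zero fun d _ => ?_
    simp only [Nmat, of_apply]
    rw [if_neg (by omega), zero_mul]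

theorem mul_Nmat_apply (M : Matrix (Fin (2 * g)) (Fin (2 * g)) ℤ) (a b : Fin (2 * g)) :
    (M * Nmat g i) a b =
      if h : ((b : ℕ) = i ∨ (b : ℕ) = 2 * g - i) ∧ 1 ≤ (b : ℕ) then
        M a ⟨b - 1, by omega⟩
      else 0 := by
  rw [mul_apply]
  split_ifs with h
  · rw [Finset.sum_eq_single ⟨b - 1, by omega⟩]
    · simp [Nmat]; omega
    · intro d _ hd
      simp only [Nmat, of_apply, ne_eq, Fin.ext_iff] at hd ⊢
      rw [if_neg (by omega), mul_zero]
    · simp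
  · refine Finset.sum_eq_zero fun d _ => ?_
    simp only [Nmat, of_apply]
    rw [if_neg (by omega), mul_zero]

theorem Nmat_mul_self : Nmat g i * Nmat g i = 0 := by
  ext a b
  rw [Nmat_mul_apply]
  split_ifs
  · simp only [Nmat, of_apply]
    rw [if_neg (by omega), Matrix.zero_apply]
  · rfl

theorem Nmat_mul_transpose (hi : 1 ≤ i) (hig : i < 2 * g) :
    Nmat g i * (Nmat g i)ᵀ =
      diagonal fun a : Fin (2 * g) =>
        if (a : ℕ) + 1 = i ∨ (a : ℕ) + 1 = 2 * g - i then 1 else 0 := by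
  ext a b
  rw [Nmat_mul_apply]
  simp only [transpose_apply, Nmat, of_apply, diagonal_apply, Fin.ext_iff]
  split_ifs <;> omega

theorem transpose_mul_Nmat (hi : 1 ≤ i) (hig : i < 2 * g) :
    (Nmat g i)ᵀ * Nmat g i =
      diagonal fun a : Fin (2 * g) => if (a : ℕ) = i ∨ (a : ℕ) = 2 * g - i then 1 else 0 := by
  ext a b
  rw [mul_Nmat_apply]
  simp only [transpose_apply, Nmat, of_apply, diagonal_apply, Fin.ext_iff]
  split_ifs <;> omega

theorem Nmat_mul_transpose_mul_Nmat (hi : 1 ≤ i) (hig : i < 2 * g) :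
    Nmat g i * (Nmat g i)ᵀ * Nmat g i = Nmat g i := by
  ext a b
  rw [Nmat_mul_transpose hi hig, diagonal_mul]
  simp only [Nmat, of_apply]
  split_ifs <;> omega

theorem isSymm_Jmat_mul_Nmat : (Jmat g * Nmat g i).IsSymm := by
  refine IsSymm.ext fun a b => ?_
  rw [Jmat_mul_apply, Jmat_mul_apply]
  simp only [Nmat, of_apply, Fin.val_rev]
  split_ifs <;> first | omega | simp only [mul_one]
  exact neg_one_pow_congr (by simp only [Nat.even_iff]; omega)

theorem isSymm_Jmat_mul_transpose_Nmat : (Jmat g * (Nmat g i)ᵀ).IsSymm := by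
  refine IsSymm.ext fun a b => ?_
  rw [Jmat_mul_apply, Jmat_mul_apply]
  simp only [transpose_apply, Nmat, of_apply, Fin.val_rev]
  split_ifs <;> first | omega | simp only [mul_one]
  exact neg_one_pow_congr (by simp only [Nat.even_iff]; omega)

end Nmat

theorem isSymplectic_Emat (g i : ℕ) (t : ℤ) : IsSymplectic (Jmat g) (Emat g i t) := by
  rw [Emat_eq_one_add_smul_Nmat]
  refine isSymplectic_one_add Jmat_transpose ?_ ?_
  · rw [Matrix.mul_smul]
    exact isSymm_Jmat_mul_Nmat.smul t
  · rw [smul_mul_smul_comm, Nmat_mul_self, smul_zero]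

theorem isSymplectic_one_add_transpose_Nmat (g i : ℕ) :
    IsSymplectic (Jmat g) (1 + (Nmat g i)ᵀ) :=
  isSymplectic_one_add Jmat_transpose isSymm_Jmat_mul_transpose_Nmat
    (by rw [← transpose_mul, Nmat_mul_self, transpose_zero])

theorem Wmat_eq_Emat_mul_mul_Emat {g i : ℕ} (hi : 1 ≤ i) (hig : i < 2 * g) :
    Wmat g i = Emat g i (-1) * (1 + (Nmat g i)ᵀ) * Emat g i (-1) := by
  rw [Emat_eq_one_add_smul_Nmat, neg_one_smul, ← sub_eq_add_neg,
    one_sub_mul_one_add_mul_one_sub Nmat_mul_self (Nmat_mul_transpose_mul_Nmat hi hig),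
    Nmat_mul_transpose hi hig, transpose_mul_Nmat hi hig]
  ext a b
  simp only [Wmat, Nmat, of_apply, Matrix.sub_apply, Matrix.add_apply, transpose_apply, one_apply,
    diagonal_apply, Fin.ext_iff]
  split_ifs <;> omega

theorem elementary_matrices_are_symplectic_general (g : ℕ) :
    ∀ t : ℤ, ∀ i : ℕ, 1 ≤ i → i ≤ g →
      (Emat g i t)ᵀ * Jmat g * Emat g i t = Jmat g ∧
        (Wmat g i)ᵀ * Jmat g * Wmat g i = Jmat g := by
  intro t i hi hig
  refine ⟨isSymplectic_Emat g i t, ?_⟩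
  rw [Wmat_eq_Emat_mul_mul_Emat hi (by omega)]
  exact ((isSymplectic_Emat g i (-1)).mul (isSymplectic_one_add_transpose_Nmat g i)).mul
    (isSymplectic_Emat g i (-1))

theorem elementary_matrices_are_symplectic (g : ℕ) (hg : 1 ≤ g) :
    ∀ t : ℤ, ∀ i : ℕ, 1 ≤ i → i ≤ g →
      (Emat g i t)ᵀ * Jmat g * Emat g i t = Jmat g ∧
        (Wmat g i)ᵀ * Jmat g * Wmat g i = Jmat g :=
  elementary_matrices_are_symplectic_general g
end
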